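/- arXiv:2406.10829 — 10 statements merged into one kernel-verified Lean document; each statement's English description precedes it below -/
import Mathlib

section
/- Let G be a graph and let u, v be adjacent vertices of G, each of degree at most 2. Let G' be the graph obtained from G by deleting the edge uv. Then G has a set S of at most k vertices such that G − S has maximum degree at most 2 if and only if G' has such a set. -/
/-- deleting an edge between two vertices of degree at most 2 does not
change the existence of a cPCP-set of size at most `k`. -/
theorem stmt0 {V : Type*} [Fintype V] (G : SimpleGraph V) (u v : V)
    (huv : G.Adj u v)
    (hu : {w | G.Adj u w}.ncard ≤ 2) (hv : {w | G.Adj v w}.ncard ≤ 2)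
    (k : ℕ) :
    (∃ S : Set V, S.ncard ≤ k ∧ ∀ x ∉ S, {w | G.Adj x w ∧ w ∉ S}.ncard ≤ 2) ↔
    (∃ S : Set V, S.ncard ≤ k ∧
      ∀ x ∉ S, {w | (G.deleteEdges {s(u, v)}).Adj x w ∧ w ∉ S}.ncard ≤ 2) := by
  constructor
  · rintro ⟨S, hSk, hS⟩
    refine ⟨S, hSk, fun x hx => ?_⟩
    refine le_trans (Set.ncard_le_ncard ?_ (Set.toFinite _)) (hS x hx)
    intro w hw
    exact ⟨hw.1.1, hw.2⟩
  · rintro ⟨S, hSk, hS⟩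
    refine ⟨S, hSk, fun x hx => ?_⟩
    by_cases hxu : x = u
    · subst hxu
      exact le_trans (Set.ncard_le_ncard (fun w hw => hw.1) (Set.toFinite _)) hu
    by_cases hxv : x = v
    · subst hxv
      exact le_trans (Set.ncard_le_ncard (fun w hw => hw.1) (Set.toFinite _)) hv
    have : {w | G.Adj x w ∧ w ∉ S} = {w | (G.deleteEdges {s(u, v)}).Adj x w ∧ w ∉ S} := by
      ext w
      simp only [Set.mem_setOf_eq, SimpleGraph.deleteEdges_adj, Set.mem_singleton_iff]
      constructor
      · rintro ⟨ha, hwS⟩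
        refine ⟨⟨ha, ?_⟩, hwS⟩
        rw [Sym2.eq_iff]
        rintro (⟨rfl, rfl⟩ | ⟨rfl, rfl⟩) <;> simp_all
      · rintro ⟨⟨ha, _⟩, hwS⟩
        exact ⟨ha, hwS⟩
    rw [this]
    exact hS x hx
end

section
/- Let G be a graph containing a triangle {u, v, w} such that the set of neighbors of {u,v,w} outside the triangle consists of exactly one vertex x. Then among all minimum cPCP-sets of G there is one containing x. -/
/-- if a triangle `{u,v,w}` has exactly one outside neighbor `x`,
then some minimum cPCP-set contains `x`. -/
theorem stmt1 {V : Type*} [Fintype V] (G : SimpleGraph V) (u v w x : V)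
    (h1 : G.Adj u v) (h2 : G.Adj v w) (h3 : G.Adj u w)
    (hN : {y | y ∉ ({u, v, w} : Set V) ∧ (G.Adj u y ∨ G.Adj v y ∨ G.Adj w y)} = {x}) :
    ∃ S : Set V, (∀ z ∉ S, {y | G.Adj z y ∧ y ∉ S}.ncard ≤ 2) ∧ x ∈ S ∧
      ∀ S' : Set V, (∀ z ∉ S', {y | G.Adj z y ∧ y ∉ S'}.ncard ≤ 2) → S.ncard ≤ S'.ncard := by
  classical
  have hx : x ∉ ({u, v, w} : Set V) ∧ (G.Adj u x ∨ G.Adj v x ∨ G.Adj w x) := by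
    have hxx : x ∈ ({x} : Set V) := rfl
    rw [← hN] at hxx; exact hxx
  have hxu : x ≠ u := fun h => hx.1 (by simp [h])
  have hxv : x ≠ v := fun h => hx.1 (by simp [h])
  have hxw : x ≠ w := fun h => hx.1 (by simp [h])
  have key : ∀ y, y ∉ ({u,v,w} : Set V) → (G.Adj u y ∨ G.Adj v y ∨ G.Adj w y) → y = x := by
    intro y hy hadj
    have hmem : y ∈ {y | y ∉ ({u, v, w} : Set V) ∧ (G.Adj u y ∨ G.Adj v y ∨ G.Adj w y)} :=
      ⟨hy, hadj⟩
    rw [hN] at hmem; exact hmem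
  -- bound for triangle vertices when x ∈ S
  have tri_bound : ∀ S : Set V, x ∈ S → ∀ z ∈ ({u,v,w} : Set V),
      {y | G.Adj z y ∧ y ∉ S}.ncard ≤ 2 := by
    intro S hxS z hz
    have gen : ∀ a b c : V, z = a → b ≠ c → ({a,b,c} : Set V) = {u,v,w} →
        (∀ y, G.Adj a y → (G.Adj u y ∨ G.Adj v y ∨ G.Adj w y)) →
        {y | G.Adj z y ∧ y ∉ S}.ncard ≤ 2 := by
      intro a b c hz hbc htri hor
      have hsub : {y | G.Adj z y ∧ y ∉ S} ⊆ ({b, c} : Set V) := by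
        intro y hy
        obtain ⟨hadj, hyS⟩ := hy
        subst hz
        by_cases hyt : y ∈ ({u,v,w} : Set V)
        · rw [← htri] at hyt
          rcases hyt with h | h | h
          · exact ((G.ne_of_adj hadj) h.symm).elim
          · exact Or.inl h
          · exact Or.inr h
        · exact absurd (key y hyt (hor y hadj)) (fun h => hyS (h ▸ hxS))
      calc {y | G.Adj z y ∧ y ∉ S}.ncard ≤ ({b,c} : Set V).ncard :=
            Set.ncard_le_ncard hsub (Set.toFinite _)
        _ = 2 := Set.ncard_pair hbc
    rcases hz with h | h | h
    · exact gen u v w h h2.ne (by rfl) (fun y hy => Or.inl hy)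
    · exact gen v u w h (G.ne_of_adj h3) (by ext t; simp; tauto)
        (fun y hy => Or.inr (Or.inl hy))
    · exact gen w u v h h1.ne (by ext t; simp; tauto)
        (fun y hy => Or.inr (Or.inr hy))
  -- existence of a minimum cPCP-set
  have huniv : ∀ z ∉ (Set.univ : Set V), {y | G.Adj z y ∧ y ∉ (Set.univ : Set V)}.ncard ≤ 2 := by
    intro z hz; exact absurd (Set.mem_univ z) hz
  have hne : {n | ∃ S : Set V, (∀ z ∉ S, {y | G.Adj z y ∧ y ∉ S}.ncard ≤ 2) ∧ S.ncard = n}.Nonempty :=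
    ⟨_, Set.univ, huniv, rfl⟩
  obtain ⟨S₀, hS₀, hcard⟩ := Nat.sInf_mem hne
  have hmin : ∀ S' : Set V, (∀ z ∉ S', {y | G.Adj z y ∧ y ∉ S'}.ncard ≤ 2) →
      S₀.ncard ≤ S'.ncard := by
    intro S' h
    rw [hcard]; exact Nat.sInf_le ⟨S', h, rfl⟩
  by_cases hxS : x ∈ S₀
  · exact ⟨S₀, hS₀, hxS, hmin⟩
  -- x ∉ S₀ : some triangle vertex must be in S₀
  have htriS : ∃ t ∈ ({u,v,w} : Set V), t ∈ S₀ := by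
    by_contra hcon
    push_neg at hcon
    have hu : u ∉ S₀ := hcon u (by simp)
    have hv : v ∉ S₀ := hcon v (by simp)
    have hw : w ∉ S₀ := hcon w (by simp)
    have bad : ∀ a b c : V, G.Adj a x → a ∉ S₀ → b ∉ S₀ → c ∉ S₀ →
        G.Adj a b → G.Adj a c → b ≠ c → b ≠ x → c ≠ x → False := by
      intro a b c hax ha hb hc hab hac hbc hbx hcx
      have hsub : ({b, c, x} : Set V) ⊆ {y | G.Adj a y ∧ y ∉ S₀} := by
        intro y hy
        rcases hy with h | h | h
        · subst h; exact ⟨hab, hb⟩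
        · subst h; exact ⟨hac, hc⟩
        · simp only [Set.mem_singleton_iff] at h; subst h; exact ⟨hax, hxS⟩
      have h3card : ({b, c, x} : Set V).ncard = 3 := by
        rw [Set.ncard_eq_three]
        exact ⟨b, c, x, hbc, hbx, hcx, rfl⟩
      have := Set.ncard_le_ncard hsub (Set.toFinite _)
      rw [h3card] at this
      have := le_trans this (hS₀ a ha)
      omega
    rcases hx.2 with hax | hax | hax
    · exact bad u v w hax hu hv hw h1 h3 h2.ne hxv.symm hxw.symm
    · exact bad v u w hax hv hu hw h1.symm h2 (G.ne_of_adj h3) hxu.symm hxw.symm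
    · exact bad w u v hax hw hu hv h3.symm h2.symm h1.ne hxu.symm hxv.symm
  obtain ⟨t, htm, htS⟩ := htriS
  set S : Set V := insert x (S₀ \ {t}) with hSdef
  have hxt : x ≠ t := by
    rcases htm with h | h | h
    · exact h ▸ hxu
    · exact h ▸ hxv
    · exact h ▸ hxw
  have hScard : S.ncard = S₀.ncard := by
    rw [hSdef, Set.ncard_insert_of_notMem (by simp [hxS]) (Set.toFinite _)]
    rw [Set.ncard_diff_singleton_add_one htS (Set.toFinite _)]
  have hSgood : ∀ z ∉ S, {y | G.Adj z y ∧ y ∉ S}.ncard ≤ 2 := by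
    intro z hzS
    by_cases hzt : z ∈ ({u,v,w} : Set V)
    · exact tri_bound S (Set.mem_insert x _) z hzt
    · have hzx : z ≠ x := fun h => hzS (h ▸ Set.mem_insert x _)
      have hzS₀ : z ∉ S₀ := by
        intro h
        exact hzS (Set.mem_insert_of_mem _ ⟨h, fun hzt' => hzt (Set.mem_singleton_iff.mp hzt' ▸ htm)⟩)
      have hsub : {y | G.Adj z y ∧ y ∉ S} ⊆ {y | G.Adj z y ∧ y ∉ S₀} := by
        intro y ⟨hadj, hyS⟩
        refine ⟨hadj, fun hyS₀ => ?_⟩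
        have hyx : y ≠ x := fun h => hyS (h ▸ Set.mem_insert x _)
        have hyt : y = t := by
          by_contra hyt
          exact hyS (Set.mem_insert_of_mem _ ⟨hyS₀, hyt⟩)
        subst hyt
        -- z is adjacent to triangle vertex t, z outside triangle, so z = x: contradiction
        have : z = x := by
          apply key z hzt
          rcases htm with h | h | h
          · exact Or.inl (h ▸ hadj.symm)
          · exact Or.inr (Or.inl (h ▸ hadj.symm))
          · exact Or.inr (Or.inr (h ▸ hadj.symm))
        exact hzx this
      calc {y | G.Adj z y ∧ y ∉ S}.ncard ≤ {y | G.Adj z y ∧ y ∉ S₀}.ncard :=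
            Set.ncard_le_ncard hsub (Set.toFinite _)
        _ ≤ 2 := hS₀ z hzS₀
  exact ⟨S, hSgood, Set.mem_insert x _, fun S' h => hScard ▸ hmin S' h⟩
end

section
/- Let G be a graph and suppose vertex v dominates vertex u, i.e., N[u] ⊆ N[v]. Then there exists a minimum cPCP-set of G that either contains v, or contains neither v nor u. -/
/-!
If a minimum set `S` with `G - S` of maximum degree `≤ k` contains `u` but not `v`, exchange
`u` for `v`. The vertex `u` then has at most as many surviving neighbours as `v` had, since
`N[u] ⊆ N[v]`; a neighbour of `u` gains `u` but loses `v`; every other vertex only loses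
neighbours.
-/

namespace SimpleGraph

variable {V : Type*} (G : SimpleGraph V)

/-- `G - S` has maximum degree at most `k`; a cPCP-set is the case `k = 2`. -/
def IsBoundedDegreeDeletionSet (k : ℕ) (S : Set V) : Prop :=
  ∀ z ∉ S, {y | G.Adj z y ∧ y ∉ S}.ncard ≤ k

/-- `v` dominates `u`, i.e. `N[u] ⊆ N[v]`. -/
def Dominates (v u : V) : Prop :=
  ∀ w, (w = u ∨ G.Adj u w) → (w = v ∨ G.Adj v w)

variable {G}

theorem isBoundedDegreeDeletionSet_univ (k : ℕ) :
    G.IsBoundedDegreeDeletionSet k Set.univ :=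
  fun _ hz => absurd (Set.mem_univ _) hz

theorem exists_isBoundedDegreeDeletionSet_forall_ncard_le [Finite V] (k : ℕ) :
    ∃ S, G.IsBoundedDegreeDeletionSet k S ∧
      ∀ S', G.IsBoundedDegreeDeletionSet k S' → S.ncard ≤ S'.ncard :=
  Set.exists_min_image {S | G.IsBoundedDegreeDeletionSet k S} Set.ncard (Set.toFinite _)
    ⟨_, isBoundedDegreeDeletionSet_univ k⟩

theorem IsBoundedDegreeDeletionSet.exchange [Finite V] {k : ℕ} {S : Set V} {u v : V}
    (hS : G.IsBoundedDegreeDeletionSet k S) (hdom : G.Dominates v u) (hu : u ∈ S) (hv : v ∉ S) :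
    G.IsBoundedDegreeDeletionSet k (insert v (S \ {u})) := by
  intro z hz
  simp only [Set.mem_insert_iff, Set.mem_sdiff, Set.mem_singleton_iff, not_or, not_and,
    not_not] at hz
  obtain ⟨hzv, hzS⟩ := hz
  have mem_T {y : V} (hyv : y ≠ v) (hyu : y ≠ u) :
      y ∈ insert v (S \ {u}) ↔ y ∈ S := by simp [hyv, hyu]
  by_cases hzu : z = u
  · subst hzu
    refine le_trans (Set.ncard_le_ncard ?_ (Set.toFinite _)) (hS v hv)
    rintro y ⟨hzy, hyT⟩
    have hyv : y ≠ v := by rintro rfl; exact hyT (Set.mem_insert _ _)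
    refine ⟨(hdom y (Or.inr hzy)).resolve_left hyv, ?_⟩
    rwa [← mem_T hyv hzy.ne']
  replace hzS : z ∉ S := fun h => hzu (hzS h)
  by_cases hzu_adj : G.Adj z u
  · have hzv_adj : G.Adj z v := ((hdom z (Or.inr hzu_adj.symm)).resolve_left hzv).symm
    calc {y | G.Adj z y ∧ y ∉ insert v (S \ {u})}.ncard
        ≤ (insert u ({y | G.Adj z y ∧ y ∉ S} \ {v})).ncard := by
          refine Set.ncard_le_ncard ?_ (Set.toFinite _)
          rintro y ⟨hzy, hyT⟩
          have hyv : y ≠ v := by rintro rfl; exact hyT (Set.mem_insert _ _)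
          by_cases hyu : y = u
          · exact Or.inl hyu
          · exact Or.inr ⟨⟨hzy, by rwa [← mem_T hyv hyu]⟩, hyv⟩
      _ = {y | G.Adj z y ∧ y ∉ S}.ncard :=
          Set.ncard_exchange (fun h => h.2 hu) ⟨hzv_adj, hv⟩
      _ ≤ k := hS z hzS
  · refine le_trans (Set.ncard_le_ncard ?_ (Set.toFinite _)) (hS z hzS)
    rintro y ⟨hzy, hyT⟩
    have hyv : y ≠ v := by rintro rfl; exact hyT (Set.mem_insert _ _)
    have hyu : y ≠ u := by rintro rfl; exact hzu_adj hzy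
    exact ⟨hzy, by rwa [← mem_T hyv hyu]⟩

end SimpleGraph

open SimpleGraph in
/-- if `v` dominates `u` (`N[u] ⊆ N[v]`) then there is a minimum cPCP-set
containing `v` or containing neither `v` nor `u`. -/
theorem stmt2 {V : Type*} [Fintype V] (G : SimpleGraph V) (u v : V)
    (hdom : ∀ w, (w = u ∨ G.Adj u w) → (w = v ∨ G.Adj v w)) :
    ∃ S : Set V, (∀ z ∉ S, {y | G.Adj z y ∧ y ∉ S}.ncard ≤ 2) ∧
      (∀ S' : Set V, (∀ z ∉ S', {y | G.Adj z y ∧ y ∉ S'}.ncard ≤ 2) → S.ncard ≤ S'.ncard) ∧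
      (v ∈ S ∨ (v ∉ S ∧ u ∉ S)) := by
  obtain ⟨S, hS, hmin⟩ := exists_isBoundedDegreeDeletionSet_forall_ncard_le (G := G) 2
  by_cases hv : v ∈ S
  · exact ⟨S, hS, hmin, Or.inl hv⟩
  by_cases hu : u ∈ S
  · refine ⟨insert v (S \ {u}), hS.exchange hdom hu hv, fun S' hS' => ?_,
      Or.inl (Set.mem_insert _ _)⟩
    rw [Set.ncard_exchange hv hu]
    exact hmin S' hS'
  · exact ⟨S, hS, hmin, Or.inr ⟨hv, hu⟩⟩
end

section
/- Let G be a graph and v a vertex with two degree-1 neighbors u₁ and u₂. Then there exists a minimum cPCP-set of G containing neither u₁ nor u₂. Moreover, if v has degree at most 3, then there is a minimum cPCP-set containing none of v, u₁, u₂. -/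
private lemma pcp_sub2 {V : Type*} [Fintype V] {A B : Set V} (h : A ⊆ B) (hB : B.ncard ≤ 2) :
    A.ncard ≤ 2 :=
  le_trans (Set.ncard_le_ncard h B.toFinite) hB

private lemma pcp_card_swap {V : Type*} [Fintype V] {S T : Set V} {a : V} (ha : a ∈ S)
    (haT : a ∈ T) (b : V) : ((S \ T) ∪ {b}).ncard ≤ S.ncard := by
  have hnot : a ∉ S \ T := fun h => h.2 haT
  have hsub : insert a (S \ T) ⊆ S := Set.insert_subset ha Set.diff_subset
  calc ((S \ T) ∪ {b}).ncard = (insert b (S \ T)).ncard := by rw [Set.union_singleton]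
    _ ≤ (S \ T).ncard + 1 := Set.ncard_insert_le _ _
    _ = (insert a (S \ T)).ncard := (Set.ncard_insert_of_notMem hnot (Set.toFinite _)).symm
    _ ≤ S.ncard := Set.ncard_le_ncard hsub S.toFinite

/-- if `v` has two degree-1 neighbors `u₁, u₂` then some minimum cPCP-set
avoids both; if moreover `d(v) ≤ 3` some minimum cPCP-set avoids `v, u₁, u₂`. -/
theorem stmt3 {V : Type*} [Fintype V] (G : SimpleGraph V) (v u₁ u₂ : V) (h12 : u₁ ≠ u₂)
    (h1 : G.Adj v u₁) (h2 : G.Adj v u₂)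
    (hd1 : {w | G.Adj u₁ w}.ncard = 1) (hd2 : {w | G.Adj u₂ w}.ncard = 1) :
    (∃ S : Set V, (∀ z ∉ S, {y | G.Adj z y ∧ y ∉ S}.ncard ≤ 2) ∧
        (∀ S' : Set V, (∀ z ∉ S', {y | G.Adj z y ∧ y ∉ S'}.ncard ≤ 2) → S.ncard ≤ S'.ncard) ∧
        u₁ ∉ S ∧ u₂ ∉ S) ∧
    ({w | G.Adj v w}.ncard ≤ 3 →
      ∃ S : Set V, (∀ z ∉ S, {y | G.Adj z y ∧ y ∉ S}.ncard ≤ 2) ∧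
        (∀ S' : Set V, (∀ z ∉ S', {y | G.Adj z y ∧ y ∉ S'}.ncard ≤ 2) → S.ncard ≤ S'.ncard) ∧
        v ∉ S ∧ u₁ ∉ S ∧ u₂ ∉ S) := by
  classical
  -- unique neighbor facts
  have hn1 : ∀ w, G.Adj u₁ w → w = v := by
    intro w hw
    obtain ⟨a, ha⟩ := Set.ncard_eq_one.mp hd1
    have hv : v ∈ {x | G.Adj u₁ x} := G.adj_symm h1
    have hw' : w ∈ {x | G.Adj u₁ x} := hw
    rw [ha] at hv hw'
    rw [Set.mem_singleton_iff.mp hw', Set.mem_singleton_iff.mp hv]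
  have hn2 : ∀ w, G.Adj u₂ w → w = v := by
    intro w hw
    obtain ⟨a, ha⟩ := Set.ncard_eq_one.mp hd2
    have hv : v ∈ {x | G.Adj u₂ x} := G.adj_symm h2
    have hw' : w ∈ {x | G.Adj u₂ x} := hw
    rw [ha] at hv hw'
    rw [Set.mem_singleton_iff.mp hw', Set.mem_singleton_iff.mp hv]
  -- existence of a minimum cPCP-set
  have hex : ∃ n : ℕ, ∃ S : Set V, (∀ z ∉ S, {y | G.Adj z y ∧ y ∉ S}.ncard ≤ 2) ∧ S.ncard = n :=
    ⟨(Set.univ : Set V).ncard, Set.univ, fun z hz => absurd (Set.mem_univ z) hz, rfl⟩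
  obtain ⟨S, hS, hScard⟩ := Nat.find_spec hex
  have hmin : ∀ S' : Set V, (∀ z ∉ S', {y | G.Adj z y ∧ y ∉ S'}.ncard ≤ 2) →
      S.ncard ≤ S'.ncard := by
    intro S' hS'
    rw [hScard]
    by_contra h
    push_neg at h
    exact Nat.find_min hex h ⟨S', hS', rfl⟩
  -- degree-1 vertices always have few uncovered neighbors
  have key1 : ∀ (S₁ : Set V), {y | G.Adj u₁ y ∧ y ∉ S₁}.ncard ≤ 2 := by
    intro S₁
    refine pcp_sub2 (B := {v}) ?_ (by simp)
    rintro y ⟨hadj, -⟩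
    exact hn1 y hadj
  have key2 : ∀ (S₁ : Set V), {y | G.Adj u₂ y ∧ y ∉ S₁}.ncard ≤ 2 := by
    intro S₁
    refine pcp_sub2 (B := {v}) ?_ (by simp)
    rintro y ⟨hadj, -⟩
    exact hn2 y hadj
  constructor
  · -- Part 1
    by_cases hc : u₁ ∈ S ∨ u₂ ∈ S
    · refine ⟨(S \ {u₁, u₂}) ∪ {v}, ?_, ?_, ?_, ?_⟩
      · intro z hz
        by_cases hz1 : z = u₁
        · subst hz1; exact key1 _
        by_cases hz2 : z = u₂
        · subst hz2; exact key2 _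
        have hzv : z ≠ v := by
          intro h; exact hz (Or.inr (by simp [h]))
        have hzS : z ∉ S := by
          intro h
          exact hz (Or.inl ⟨h, by simp [hz1, hz2]⟩)
        refine pcp_sub2 (B := {y | G.Adj z y ∧ y ∉ S}) ?_ (hS z hzS)
        rintro y ⟨hadj, hy⟩
        refine ⟨hadj, ?_⟩
        intro hyS
        by_cases hy1 : y = u₁
        · subst hy1
          exact hzv (hn1 z (G.adj_symm hadj))
        by_cases hy2 : y = u₂
        · subst hy2
          exact hzv (hn2 z (G.adj_symm hadj))
        exact hy (Or.inl ⟨hyS, by simp [hy1, hy2]⟩)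
      · intro S' hS'
        refine le_trans ?_ (hmin S' hS')
        rcases hc with h | h
        · exact pcp_card_swap h (by simp) v
        · exact pcp_card_swap h (by simp) v
      · rintro (⟨-, hne⟩ | hmem)
        · exact hne (by simp)
        · exact h1.ne' (Set.mem_singleton_iff.mp hmem)
      · rintro (⟨-, hne⟩ | hmem)
        · exact hne (by simp)
        · exact h2.ne' (Set.mem_singleton_iff.mp hmem)
    · push_neg at hc
      exact ⟨S, hS, hmin, hc.1, hc.2⟩
  · -- Part 2
    intro hv3
    by_cases hthird : ∃ w, G.Adj v w ∧ w ≠ u₁ ∧ w ≠ u₂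
    · obtain ⟨w, hw, hw1, hw2⟩ := hthird
      have hwv : w ≠ v := hw.ne'
      have hNv : ∀ y, G.Adj v y → y = u₁ ∨ y = u₂ ∨ y = w := by
        have hsub : ({u₁, u₂, w} : Set V) ⊆ {x | G.Adj v x} := by
          rintro x (rfl | rfl | rfl)
          · exact h1
          · exact h2
          · exact hw
        have hcard : ({u₁, u₂, w} : Set V).ncard = 3 := by
          rw [Set.ncard_insert_of_notMem (by simp [h12, Ne.symm hw1]) (Set.toFinite _),
            Set.ncard_pair (Ne.symm hw2)]
        have heq : ({u₁, u₂, w} : Set V) = {x | G.Adj v x} :=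
          Set.eq_of_subset_of_ncard_le hsub (by omega) (Set.toFinite _)
        intro y hy
        have : y ∈ ({u₁, u₂, w} : Set V) := heq ▸ (hy : y ∈ {x | G.Adj v x})
        simpa using this
      by_cases hc : v ∈ S ∨ u₁ ∈ S ∨ u₂ ∈ S
      · refine ⟨(S \ {v, u₁, u₂}) ∪ {w}, ?_, ?_, ?_, ?_, ?_⟩
        · intro z hz
          by_cases hz1 : z = u₁
          · subst hz1; exact key1 _
          by_cases hz2 : z = u₂
          · subst hz2; exact key2 _
          have hzw : z ≠ w := by
            intro h; exact hz (Or.inr (by simp [h]))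
          by_cases hzv : z = v
          · subst hzv
            refine pcp_sub2 (B := {u₁, u₂}) ?_ (le_of_eq (Set.ncard_pair h12))
            rintro y ⟨hadj, hy⟩
            rcases hNv y hadj with rfl | rfl | rfl
            · simp
            · simp
            · exact absurd (Or.inr rfl) hy
          have hzS : z ∉ S := by
            intro h
            exact hz (Or.inl ⟨h, by simp [hzv, hz1, hz2]⟩)
          refine pcp_sub2 (B := {y | G.Adj z y ∧ y ∉ S}) ?_ (hS z hzS)
          rintro y ⟨hadj, hy⟩
          refine ⟨hadj, ?_⟩
          intro hyS
          by_cases hy1 : y = u₁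
          · subst hy1; exact hzv (hn1 z (G.adj_symm hadj))
          by_cases hy2 : y = u₂
          · subst hy2; exact hzv (hn2 z (G.adj_symm hadj))
          by_cases hyv : y = v
          · subst hyv
            rcases hNv z (G.adj_symm hadj) with h | h | h
            · exact hz1 h
            · exact hz2 h
            · exact hzw h
          exact hy (Or.inl ⟨hyS, by simp [hyv, hy1, hy2]⟩)
        · intro S' hS'
          refine le_trans ?_ (hmin S' hS')
          rcases hc with h | h | h
          · exact pcp_card_swap h (by simp) w
          · exact pcp_card_swap h (by simp) w
          · exact pcp_card_swap h (by simp) w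
        · rintro (⟨-, hne⟩ | hmem)
          · exact hne (by simp)
          · exact hwv (Set.mem_singleton_iff.mp hmem).symm
        · rintro (⟨-, hne⟩ | hmem)
          · exact hne (by simp)
          · exact hw1 (Set.mem_singleton_iff.mp hmem).symm
        · rintro (⟨-, hne⟩ | hmem)
          · exact hne (by simp)
          · exact hw2 (Set.mem_singleton_iff.mp hmem).symm
      · push_neg at hc
        exact ⟨S, hS, hmin, hc.1, hc.2.1, hc.2.2⟩
    · push_neg at hthird
      have hNv : ∀ y, G.Adj v y → y = u₁ ∨ y = u₂ := by
        intro y hy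
        by_cases hy1 : y = u₁
        · exact Or.inl hy1
        · exact Or.inr (hthird y hy hy1)
      refine ⟨S \ {v, u₁, u₂}, ?_, ?_, ?_, ?_, ?_⟩
      · intro z hz
        by_cases hz1 : z = u₁
        · subst hz1; exact key1 _
        by_cases hz2 : z = u₂
        · subst hz2; exact key2 _
        by_cases hzv : z = v
        · subst hzv
          refine pcp_sub2 (B := {u₁, u₂}) ?_ (le_of_eq (Set.ncard_pair h12))
          rintro y ⟨hadj, -⟩
          rcases hNv y hadj with rfl | rfl
          · simp
          · simp
        have hzS : z ∉ S := by
          intro h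
          exact hz ⟨h, by simp [hzv, hz1, hz2]⟩
        refine pcp_sub2 (B := {y | G.Adj z y ∧ y ∉ S}) ?_ (hS z hzS)
        rintro y ⟨hadj, hy⟩
        refine ⟨hadj, ?_⟩
        intro hyS
        by_cases hy1 : y = u₁
        · subst hy1; exact hzv (hn1 z (G.adj_symm hadj))
        by_cases hy2 : y = u₂
        · subst hy2; exact hzv (hn2 z (G.adj_symm hadj))
        by_cases hyv : y = v
        · subst hyv
          rcases hNv z (G.adj_symm hadj) with h | h
          · exact hz1 h
          · exact hz2 h
        exact hy ⟨hyS, by simp [hyv, hy1, hy2]⟩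
      · intro S' hS'
        exact le_trans (Set.ncard_le_ncard Set.diff_subset S.toFinite) (hmin S' hS')
      · exact fun h => h.2 (by simp)
      · exact fun h => h.2 (by simp)
      · exact fun h => h.2 (by simp)
end

section
/- Let G be a proper graph (maximum degree at most 4; every neighbor of any degree-4 vertex has degree at most 2; every degree-2 vertex has at least one neighbor of degree at least 3; every connected component has at least 6 vertices). If G has a vertex set S with |S| ≤ k such that G − S has maximum degree at most 2, then |V(G)| ≤ 100k. -/
/-!
A vertex of degree at least 3 outside `S` keeps at most two of its neighbours outside `S`, so it is
adjacent to `S`; hence the vertices of degree at least 3 lie in the closed neighbourhood of `S`, of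
size at most `5k`. Every vertex lies within distance two of such a vertex: a degree-2 vertex has a
neighbour of degree at least 3, and the neighbour of a degree-1 vertex has degree 2 or at least 3,
because two adjacent leaves would form a component with two vertices. Within distance two of a
vertex of degree at most 4 there are at most `4 · 5` vertices, so `|V| ≤ 20 · 5k`.
-/

open Finset

namespace SimpleGraph

variable {V : Type*} {G : SimpleGraph V}

lemma ncard_neighborSet_eq_degree [Fintype V] [DecidableRel G.Adj] (v : V) :
    (G.neighborSet v).ncard = G.degree v :=
  Set.ncard_eq_toFinset_card' _

lemma ConnectedComponent.supp_subset_of_adj_mem {A : Set V}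
    (hA : ∀ a ∈ A, ∀ b, G.Adj a b → b ∈ A) {v : V} (hv : v ∈ A) :
    (G.connectedComponentMk v).supp ⊆ A := by
  intro u hu
  obtain ⟨p⟩ := (ConnectedComponent.eq.mp hu).symm
  clear hu
  induction p with
  | nil => exact hv
  | cons h _ ih => exact ih (hA _ hv _ h)

section Finite

variable [Fintype V] [DecidableRel G.Adj]

lemma ncard_supp_le_two_of_degree_le_one {v : V} (hv : G.degree v ≤ 1)
    (hN : ∀ w, G.Adj v w → G.degree w ≤ 1) : (G.connectedComponentMk v).supp.ncard ≤ 2 := by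
  classical
  have hclosed : ∀ a ∈ (insert v (G.neighborFinset v) : Set V), ∀ b, G.Adj a b →
      b ∈ (insert v (G.neighborFinset v) : Set V) := by
    rintro a (rfl | ha) b hab
    · exact Or.inr (by simpa using hab)
    · have hva : G.Adj v a := by simpa using ha
      exact Or.inl <| card_le_one.mp (hN a hva) b (by simpa using hab) v (by simpa using hva.symm)
  calc (G.connectedComponentMk v).supp.ncard
      ≤ (insert v (G.neighborFinset v) : Set V).ncard :=
        Set.ncard_le_ncard (ConnectedComponent.supp_subset_of_adj_mem hclosed (Set.mem_insert v _))
    _ ≤ (G.neighborFinset v : Set V).ncard + 1 := Set.ncard_insert_le _ _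
    _ ≤ 2 := by rw [Set.ncard_coe_finset]; exact Nat.add_le_add_right hv 1

lemma exists_mem_eq_or_adj_of_three_le_degree {S : Set V}
    (hS : ∀ x ∉ S, {w | G.Adj x w ∧ w ∉ S}.ncard ≤ 2) {v : V} (hv : 3 ≤ G.degree v) :
    ∃ s ∈ S, v = s ∨ G.Adj s v := by
  by_cases hvS : v ∈ S
  · exact ⟨v, hvS, Or.inl rfl⟩
  by_contra! h
  have hsub : G.neighborSet v ⊆ {w | G.Adj v w ∧ w ∉ S} :=
    fun w hw => ⟨hw, fun hwS => (h w hwS).2 hw.symm⟩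
  have := Set.ncard_le_ncard hsub
  rw [ncard_neighborSet_eq_degree] at this
  linarith [hS v hvS]

lemma exists_three_le_degree_within_two (hcomp : ∀ c : G.ConnectedComponent, 3 ≤ c.supp.ncard)
    (hdeg2 : ∀ v, G.degree v = 2 → ∃ w, G.Adj v w ∧ 3 ≤ G.degree w) (v : V) :
    ∃ u m, 3 ≤ G.degree u ∧ G.Adj u m ∧ (v = m ∨ G.Adj m v) := by
  have hleaf : ∀ x, G.degree x ≤ 1 → ∃ w, G.Adj x w ∧ 2 ≤ G.degree w := by
    intro x hx
    by_contra! h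
    have := ncard_supp_le_two_of_degree_le_one hx fun w hw => Nat.le_of_lt_succ (h w hw)
    have := hcomp (G.connectedComponentMk x)
    omega
  rcases lt_or_ge (G.degree v) 3 with hv | hv
  · rcases lt_or_ge (G.degree v) 2 with hv1 | hv2
    · obtain ⟨w, hvw, hw⟩ := hleaf v (by omega)
      rcases hw.eq_or_lt with hw2 | hw3
      · obtain ⟨u, hwu, hu⟩ := hdeg2 w hw2.symm
        exact ⟨u, w, hu, hwu.symm, Or.inr hvw.symm⟩
      · exact ⟨w, v, hw3, hvw.symm, Or.inl rfl⟩
    · obtain ⟨w, hvw, hw⟩ := hdeg2 v (by omega)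
      exact ⟨w, v, hw, hvw.symm, Or.inl rfl⟩
  · obtain ⟨w, hvw⟩ := (G.degree_pos_iff_exists_adj v).mp (by omega)
    exact ⟨v, w, hv, hvw, Or.inr hvw.symm⟩

lemma card_biUnion_insert_neighborFinset_le [DecidableEq V] {Δ : ℕ}
    (hΔ : ∀ v, G.degree v ≤ Δ) (s : Finset V) :
    #(s.biUnion fun m => insert m (G.neighborFinset m)) ≤ #s * (Δ + 1) :=
  card_biUnion_le_card_mul _ _ _ fun m _ =>
    (card_insert_le _ _).trans (Nat.add_le_add_right (by simpa using hΔ m) 1)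

end Finite

end SimpleGraph

theorem stmt4_general {V : Type*} [Fintype V] (G : SimpleGraph V) (k : ℕ)
    (h1 : ∀ v, (G.neighborSet v).ncard ≤ 4)
    (h3 : ∀ v, (G.neighborSet v).ncard = 2 →
      ∃ w ∈ G.neighborSet v, 3 ≤ (G.neighborSet w).ncard)
    (h4 : ∀ c : G.ConnectedComponent, 6 ≤ c.supp.ncard)
    (S : Set V) (hSk : S.ncard ≤ k)
    (hS : ∀ x ∉ S, {w | G.Adj x w ∧ w ∉ S}.ncard ≤ 2) :
    Fintype.card V ≤ 100 * k := by
  classical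
  simp only [G.ncard_neighborSet_eq_degree, SimpleGraph.mem_neighborSet] at h1 h3
  let closedNbhd (s : Finset V) := s.biUnion fun m => insert m (G.neighborFinset m)
  let B := univ.filter fun u => 3 ≤ G.degree u
  have hB : B ⊆ closedNbhd S.toFinset := by
    intro v hv
    obtain ⟨s, hs, hsv⟩ := G.exists_mem_eq_or_adj_of_three_le_degree hS (mem_filter.mp hv).2
    exact mem_biUnion.mpr ⟨s, by simpa using hs, by simpa using hsv⟩
  have hV : (univ : Finset V) ⊆ B.biUnion fun u => closedNbhd (G.neighborFinset u) := by
    intro v _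
    obtain ⟨u, m, hu, hum, hmv⟩ := G.exists_three_le_degree_within_two
      (fun c => le_trans (by norm_num) (h4 c)) h3 v
    refine mem_biUnion.mpr ⟨u, mem_filter.mpr ⟨mem_univ u, hu⟩,
      mem_biUnion.mpr ⟨m, ?_, ?_⟩⟩
    · simpa using hum
    · simpa [eq_comm] using hmv
  calc Fintype.card V ≤ #B * (4 * (4 + 1)) :=
        (card_le_card hV).trans <| card_biUnion_le_card_mul _ _ _ fun u _ =>
          (G.card_biUnion_insert_neighborFinset_le h1 _).trans (Nat.mul_le_mul_right _ (h1 u))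
    _ ≤ #S.toFinset * (4 + 1) * 20 := Nat.mul_le_mul_right _ <|
        (card_le_card hB).trans (G.card_biUnion_insert_neighborFinset_le h1 _)
    _ ≤ 100 * k := by rw [← Set.ncard_eq_toFinset_card']; omega

/-- a proper graph with a cPCP-set of size at most `k` has at most `100k`
vertices. -/
theorem stmt4 {V : Type*} [Fintype V] (G : SimpleGraph V) (k : ℕ)
    (h1 : ∀ v, (G.neighborSet v).ncard ≤ 4)
    (h2 : ∀ v, (G.neighborSet v).ncard = 4 →
      ∀ w ∈ G.neighborSet v, (G.neighborSet w).ncard ≤ 2)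
    (h3 : ∀ v, (G.neighborSet v).ncard = 2 →
      ∃ w ∈ G.neighborSet v, 3 ≤ (G.neighborSet w).ncard)
    (h4 : ∀ c : G.ConnectedComponent, 6 ≤ c.supp.ncard)
    (S : Set V) (hSk : S.ncard ≤ k)
    (hS : ∀ x ∉ S, {w | G.Adj x w ∧ w ∉ S}.ncard ≤ 2) :
    Fintype.card V ≤ 100 * k :=
  stmt4_general G k h1 h3 h4 S hSk hS
end

section
/- Let G be a proper graph and suppose G has a cPCP-set of size at most k. Let n₃ and n₄ denote the numbers of degree-3 and degree-4 vertices of G respectively. Then n₃/6 + n₄/3 ≤ 2k/3. -/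
/-- in a proper graph with a cPCP-set of size at most `k`,
`n₃/6 + n₄/3 ≤ 2k/3`. -/
theorem stmt5 {V : Type*} [Fintype V] (G : SimpleGraph V) (k : ℕ)
    (h1 : ∀ v, (G.neighborSet v).ncard ≤ 4)
    (h2 : ∀ v, (G.neighborSet v).ncard = 4 →
      ∀ w ∈ G.neighborSet v, (G.neighborSet w).ncard ≤ 2)
    (h3 : ∀ v, (G.neighborSet v).ncard = 2 →
      ∃ w ∈ G.neighborSet v, 3 ≤ (G.neighborSet w).ncard)
    (h4 : ∀ c : G.ConnectedComponent, 6 ≤ c.supp.ncard)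
    (S : Set V) (hSk : S.ncard ≤ k)
    (hS : ∀ x ∉ S, {w | G.Adj x w ∧ w ∉ S}.ncard ≤ 2) :
    ({v | (G.neighborSet v).ncard = 3}.ncard : ℚ) / 6 +
      ({v | (G.neighborSet v).ncard = 4}.ncard : ℚ) / 3 ≤ 2 * k / 3 := by
  classical
  let d : V → ℕ := fun v => (G.neighborSet v).ncard
  let ch : V → ℕ := fun v => if d v = 4 then 2 else if d v = 3 then 1 else 0
  let Sf : Finset V := S.toFinset
  let A : Finset V := Finset.univ.filter fun v => d v = 3
  let B : Finset V := Finset.univ.filter fun v => d v = 4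
  let D : Finset V := Finset.univ.filter fun v => v ∉ S ∧ 3 ≤ d v
  let N : V → Finset V := fun v => (G.neighborSet v).toFinset
  have hN : ∀ v, (N v).card = d v := fun v => (Set.ncard_eq_toFinset_card' _).symm
  have hNmem : ∀ v w, w ∈ N v ↔ G.Adj v w := by intro v w; simp [N]
  -- total charge equals n₃ + 2 n₄
  have hAB : Disjoint A B := by
    rw [Finset.disjoint_filter]
    intro v _ h3v h4v; omega
  have hTotal : ∑ v, ch v = A.card + 2 * B.card := by
    rw [← Finset.sum_subset (Finset.subset_univ (A ∪ B))]
    · rw [Finset.sum_union hAB]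
      have hA1 : ∑ v ∈ A, ch v = A.card := by
        rw [Finset.card_eq_sum_ones]
        refine Finset.sum_congr rfl fun v hv => ?_
        have h3v : d v = 3 := (Finset.mem_filter.mp hv).2
        simp [ch, h3v]
      have hB1 : ∑ v ∈ B, ch v = 2 * B.card := by
        have : ∑ v ∈ B, ch v = ∑ v ∈ B, 2 := by
          refine Finset.sum_congr rfl fun v hv => ?_
          have h4v : d v = 4 := (Finset.mem_filter.mp hv).2
          simp [ch, h4v]
        rw [this, Finset.sum_const, smul_eq_mul, Nat.mul_comm]
      rw [hA1, hB1]
    · intro v _ hv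
      simp only [A, B, Finset.mem_union, Finset.mem_filter, Finset.mem_univ, true_and,
        not_or] at hv
      simp [ch, hv.1, hv.2]
  -- split total over S and its complement
  have hSplit : ∑ v, ch v = ∑ v ∈ Sf, ch v + ∑ v ∈ Finset.univ \ Sf, ch v := by
    rw [← Finset.sum_sdiff (Finset.subset_univ Sf)]
    ring
  -- outside S, only D contributes
  have hDsub : D ⊆ Finset.univ \ Sf := by
    intro v hv
    simp only [D, Finset.mem_filter] at hv
    simp [Sf, hv.2.1]
  have hOutside : ∑ v ∈ Finset.univ \ Sf, ch v = ∑ v ∈ D, ch v := by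
    rw [← Finset.sum_subset hDsub]
    intro v hv hvD
    simp only [Finset.mem_sdiff, Finset.mem_univ, true_and, Sf, Set.mem_toFinset] at hv
    simp only [D, Finset.mem_filter, Finset.mem_univ, true_and, not_and, not_le] at hvD
    have := hvD hv
    have : d v ≠ 4 ∧ d v ≠ 3 := by omega
    simp [ch, this.1, this.2]
  -- each vertex in D has charge at most its number of neighbors in S
  have hDbound : ∀ v ∈ D, ch v ≤ (N v ∩ Sf).card := by
    intro v hv
    simp only [D, Finset.mem_filter, Finset.mem_univ, true_and] at hv
    have hout : ((N v) \ Sf).card ≤ 2 := by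
      have h := hS v hv.1
      have heq : {w | G.Adj v w ∧ w ∉ S} = ↑((N v) \ Sf) := by
        ext w
        simp [N, Sf, Set.mem_toFinset]
      rw [heq, Set.ncard_coe_finset] at h
      exact h
    have hsum : (N v ∩ Sf).card + ((N v) \ Sf).card = d v := by
      rw [Finset.card_inter_add_card_sdiff, hN]
    have hd4 : d v ≤ 4 := h1 v
    have : 3 ≤ d v := hv.2
    have hch : ch v = if d v = 4 then 2 else 1 := by
      by_cases h4' : d v = 4
      · simp [ch, h4']
      · have h3' : d v = 3 := by omega
        simp [ch, h3', h4']
    by_cases h4' : d v = 4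
    · rw [hch, if_pos h4']; omega
    · rw [hch, if_neg h4']; omega
  -- double counting
  have hSwap : ∑ v ∈ D, (N v ∩ Sf).card = ∑ s ∈ Sf, (D ∩ N s).card := by
    have e1 : ∀ v, (N v ∩ Sf).card = ∑ s ∈ Sf, if G.Adj v s then 1 else 0 := by
      intro v
      rw [← Finset.sum_filter]
      have : Sf.filter (fun s => G.Adj v s) = N v ∩ Sf := by
        ext w
        simp [N, Set.mem_toFinset, and_comm]
      rw [this, Finset.sum_const, smul_eq_mul, Nat.mul_one]
    have e2 : ∀ s, (D ∩ N s).card = ∑ v ∈ D, if G.Adj v s then 1 else 0 := by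
      intro s
      rw [← Finset.sum_filter]
      have : D.filter (fun v => G.Adj v s) = D ∩ N s := by
        ext w
        simp only [Finset.mem_filter, Finset.mem_inter, hNmem, and_congr_right_iff]
        intro _
        exact ⟨fun h => h.symm, fun h => h.symm⟩
      rw [this, Finset.sum_const, smul_eq_mul, Nat.mul_one]
    simp_rw [e1, e2]
    exact Finset.sum_comm
  -- per-vertex bound on S side
  have hSbound : ∀ s, ch s + (D ∩ N s).card ≤ 4 := by
    intro s
    by_cases h4' : d s = 4
    · have hempty : D ∩ N s = ∅ := by
        ext v
        simp only [Finset.mem_inter, Finset.mem_filter, Finset.mem_univ, true_and,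
          Finset.notMem_empty, iff_false, not_and, D]
        intro hvD hvN
        have hadj : v ∈ G.neighborSet s := (hNmem s v).mp hvN
        have := h2 s h4' v hadj
        simp only [d] at *
        omega
      simp [ch, h4', hempty]
    · have hcard : (D ∩ N s).card ≤ d s := by
        rw [← hN s]
        exact Finset.card_le_card Finset.inter_subset_right
      have hd4 : d s ≤ 4 := h1 s
      by_cases h3' : d s = 3
      · have : ch s = 1 := by simp [ch, h3', h4']
        omega
      · have : ch s = 0 := by simp [ch, h3', h4']
        omega
  -- combine
  have key : A.card + 2 * B.card ≤ 4 * k := by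
    have step1 : ∑ v ∈ D, ch v ≤ ∑ s ∈ Sf, (D ∩ N s).card := by
      rw [← hSwap]
      exact Finset.sum_le_sum hDbound
    have step2 : ∑ s ∈ Sf, ch s + ∑ s ∈ Sf, (D ∩ N s).card ≤ 4 * Sf.card := by
      rw [← Finset.sum_add_distrib]
      calc ∑ s ∈ Sf, (ch s + (D ∩ N s).card) ≤ ∑ _s ∈ Sf, 4 :=
            Finset.sum_le_sum fun s _ => hSbound s
        _ = 4 * Sf.card := by rw [Finset.sum_const, smul_eq_mul, Nat.mul_comm]
    have hSfk : Sf.card ≤ k := by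
      rw [← Set.ncard_coe_finset]
      simpa [Sf] using hSk
    calc A.card + 2 * B.card = ∑ v, ch v := hTotal.symm
      _ = ∑ v ∈ Sf, ch v + ∑ v ∈ Finset.univ \ Sf, ch v := hSplit
      _ = ∑ v ∈ Sf, ch v + ∑ v ∈ D, ch v := by rw [hOutside]
      _ ≤ ∑ s ∈ Sf, ch s + ∑ s ∈ Sf, (D ∩ N s).card := Nat.add_le_add_left step1 _
      _ ≤ 4 * Sf.card := step2
      _ ≤ 4 * k := Nat.mul_le_mul_left 4 hSfk
  -- translate ncards
  have hA : {v | (G.neighborSet v).ncard = 3}.ncard = A.card := by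
    rw [Set.ncard_eq_toFinset_card']
    congr 1
    ext v
    simp [A, d]
  have hB : {v | (G.neighborSet v).ncard = 4}.ncard = B.card := by
    rw [Set.ncard_eq_toFinset_card']
    congr 1
    ext v
    simp [B, d]
  rw [hA, hB]
  have hq : (A.card : ℚ) + 2 * B.card ≤ 4 * k := by exact_mod_cast key
  linarith
end

section
/- Let G be a proper graph and S a cPCP-set with |S| ≤ k, and let x be the number of degree-4 vertices in S. Let A₃ and A₄ be the sets of degree-3 and degree-4 vertices of G that are not in S. Then 3(k − x) ≥ |A₃| + 2|A₄|. -/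
/-- in a proper graph with a cPCP-set `S`, `|S| ≤ k`, with `x` degree-4
vertices in `S`, we have `3(k - x) ≥ |A₃| + 2|A₄|`. -/
theorem stmt6 {V : Type*} [Fintype V] (G : SimpleGraph V) (k : ℕ)
    (h1 : ∀ v, (G.neighborSet v).ncard ≤ 4)
    (h2 : ∀ v, (G.neighborSet v).ncard = 4 →
      ∀ w ∈ G.neighborSet v, (G.neighborSet w).ncard ≤ 2)
    (h3 : ∀ v, (G.neighborSet v).ncard = 2 →
      ∃ w ∈ G.neighborSet v, 3 ≤ (G.neighborSet w).ncard)
    (h4 : ∀ c : G.ConnectedComponent, 6 ≤ c.supp.ncard)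
    (S : Set V) (hSk : S.ncard ≤ k)
    (hS : ∀ x ∉ S, {w | G.Adj x w ∧ w ∉ S}.ncard ≤ 2) :
    ({v | (G.neighborSet v).ncard = 3 ∧ v ∉ S}.ncard : ℤ) +
      2 * {v | (G.neighborSet v).ncard = 4 ∧ v ∉ S}.ncard ≤
      3 * ((k : ℤ) - {v | v ∈ S ∧ (G.neighborSet v).ncard = 4}.ncard) := by
  classical
  set A3 := Finset.univ.filter (fun v => (G.neighborSet v).ncard = 3 ∧ v ∉ S) with hA3
  set A4 := Finset.univ.filter (fun v => (G.neighborSet v).ncard = 4 ∧ v ∉ S) with hA4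
  set T := S.toFinset with hT
  set X := T.filter (fun v => (G.neighborSet v).ncard = 4) with hX
  -- degree as a filter card
  have hd : ∀ v, (G.neighborSet v).ncard
      = (Finset.univ.filter (fun w => G.Adj v w)).card := by
    intro v
    rw [Set.ncard_eq_toFinset_card']
    congr 1
    ext w
    simp [SimpleGraph.mem_neighborSet]
  -- per-vertex lower bound
  have key : ∀ v ∉ S,
      (G.neighborSet v).ncard ≤ (T.filter (fun s => G.Adj v s)).card + 2 := by
    intro v hv
    have hout := hS v hv
    have hout' : {w | G.Adj v w ∧ w ∉ S}.ncard
        = ((Finset.univ.filter (fun w => G.Adj v w)).filter (fun w => ¬ w ∈ S)).card := by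
      rw [Set.ncard_eq_toFinset_card']
      congr 1
      ext w
      simp [Set.mem_toFinset]
    have hin : (T.filter (fun s => G.Adj v s)).card
        = ((Finset.univ.filter (fun w => G.Adj v w)).filter (fun w => w ∈ S)).card := by
      congr 1
      ext w
      simp [hT, Set.mem_toFinset, and_comm]
    have hsplit := Finset.card_filter_add_card_filter_not
      (s := Finset.univ.filter (fun w => G.Adj v w)) (p := fun w => w ∈ S)
    rw [hd v]
    omega
  -- the double count N
  have hswap :
      ∑ v ∈ A3 ∪ A4, (T.filter (fun s => G.Adj v s)).card
        = ∑ s ∈ T, ((A3 ∪ A4).filter (fun v => G.Adj v s)).card := by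
    simp only [Finset.card_filter]
    rw [Finset.sum_comm]
  have hdisj : Disjoint A3 A4 := by
    rw [Finset.disjoint_left]
    intro a ha ha'
    simp [hA3] at ha
    simp [hA4] at ha'
    omega
  -- lower bound on N
  have hlow : A3.card + 2 * A4.card ≤ ∑ v ∈ A3 ∪ A4, (T.filter (fun s => G.Adj v s)).card := by
    rw [Finset.sum_union hdisj]
    have l3 : A3.card ≤ ∑ v ∈ A3, (T.filter (fun s => G.Adj v s)).card := by
      calc A3.card = ∑ _v ∈ A3, 1 := by simp
        _ ≤ _ := by
          apply Finset.sum_le_sum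
          intro v hv
          simp [hA3] at hv
          have := key v hv.2
          omega
    have l4 : 2 * A4.card ≤ ∑ v ∈ A4, (T.filter (fun s => G.Adj v s)).card := by
      calc 2 * A4.card = ∑ _v ∈ A4, 2 := by simp [Nat.mul_comm]
        _ ≤ _ := by
          apply Finset.sum_le_sum
          intro v hv
          simp [hA4] at hv
          have := key v hv.2
          omega
    omega
  -- upper bound on N
  have hup : ∑ s ∈ T, ((A3 ∪ A4).filter (fun v => G.Adj v s)).card
      ≤ 3 * (T.card - X.card) := by
    have step : ∀ s ∈ T, ((A3 ∪ A4).filter (fun v => G.Adj v s)).card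
        ≤ if (G.neighborSet s).ncard = 4 then 0 else 3 := by
      intro s hs
      by_cases h4s : (G.neighborSet s).ncard = 4
      · simp only [h4s, if_true]
        have : (A3 ∪ A4).filter (fun v => G.Adj v s) = ∅ := by
          apply Finset.filter_false_of_mem
          intro v hv hadj
          have hv' : (G.neighborSet v).ncard = 3 ∨ (G.neighborSet v).ncard = 4 := by
            simp [hA3, hA4, Finset.mem_union] at hv
            tauto
          have := h2 s h4s v (by simpa [SimpleGraph.mem_neighborSet] using hadj.symm)
          omega
        simp [this]
      · simp only [h4s, if_false]
        have hsub : ((A3 ∪ A4).filter (fun v => G.Adj v s)).card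
            ≤ (Finset.univ.filter (fun v => G.Adj s v)).card := by
          apply Finset.card_le_card
          intro v hv
          simp only [Finset.mem_filter, Finset.mem_univ, true_and] at hv ⊢
          exact hv.2.symm
        have := h1 s
        rw [hd s] at this h4s
        omega
    calc ∑ s ∈ T, ((A3 ∪ A4).filter (fun v => G.Adj v s)).card
        ≤ ∑ s ∈ T, (if (G.neighborSet s).ncard = 4 then 0 else 3) :=
          Finset.sum_le_sum step
      _ = 3 * (T.filter (fun s => ¬ (G.neighborSet s).ncard = 4)).card := by
          rw [Finset.sum_ite, Finset.sum_const, Finset.sum_const]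
          simp [Nat.mul_comm]
      _ ≤ 3 * (T.card - X.card) := by
          have := Finset.card_filter_add_card_filter_not
            (s := T) (p := fun s => (G.neighborSet s).ncard = 4)
          rw [← hX] at this
          omega
  have main : A3.card + 2 * A4.card ≤ 3 * (T.card - X.card) := by
    rw [hswap] at hlow
    omega
  have hXT : X.card ≤ T.card := Finset.card_filter_le _ _
  have hTk : T.card ≤ k := by rwa [hT, ← Set.ncard_eq_toFinset_card']
  -- rewrite ncards in the goal
  have e3 : {v | (G.neighborSet v).ncard = 3 ∧ v ∉ S}.ncard = A3.card := by
    rw [Set.ncard_eq_toFinset_card']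
    congr 1
    ext v
    simp [hA3]
  have e4 : {v | (G.neighborSet v).ncard = 4 ∧ v ∉ S}.ncard = A4.card := by
    rw [Set.ncard_eq_toFinset_card']
    congr 1
    ext v
    simp [hA4]
  have eX : {v | v ∈ S ∧ (G.neighborSet v).ncard = 4}.ncard = X.card := by
    rw [Set.ncard_eq_toFinset_card']
    congr 1
    ext v
    simp [hX, hT, Set.mem_toFinset]
  rw [e3, e4, eX]
  omega
end

section
/- Let G be a graph and M ⊆ E(G) a marker set. If M contains at least one edge of every non-isolate connected component of G, then there is exactly one consistent cut (V₁, V₂) of G such that (V₁, V₂, M) is a marked consistent cut; if some non-isolate connected component of G contains no edge of M, then the number of such consistent cuts is even (and positive). -/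
open SimpleGraph

private lemma reach_iff {V : Type*} (G : SimpleGraph V) {A : Set V}
    (hA : ∀ u v, G.Adj u v → (u ∈ A ↔ v ∈ A)) {u v : V} (h : G.Reachable u v) :
    u ∈ A ↔ v ∈ A := by
  obtain ⟨p⟩ := h
  induction p with
  | nil => rfl
  | cons hadj _ ih => exact (hA _ _ hadj).trans ih

private lemma key_count {V : Type*} [Fintype V] (G : SimpleGraph V) (M : Set (Sym2 V)) :
    {A : Set V | (∀ u v, G.Adj u v → (u ∈ A ↔ v ∈ A)) ∧
        (∀ v, (∀ w, ¬ G.Adj v w) → v ∈ A) ∧ ∀ e ∈ M, ∀ a ∈ e, a ∈ A}.ncard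
      = 2 ^ Nat.card {c : G.ConnectedComponent |
          (∃ a b, G.Adj a b ∧ G.connectedComponentMk a = c) ∧
          ¬ ∃ e ∈ M, ∃ a, a ∈ e ∧ G.connectedComponentMk a = c} := by
  classical
  set Free : Set G.ConnectedComponent := {c |
      (∃ a b, G.Adj a b ∧ G.connectedComponentMk a = c) ∧
      ¬ ∃ e ∈ M, ∃ a, a ∈ e ∧ G.connectedComponentMk a = c} with hFree
  set Φ : Set G.ConnectedComponent → Set V := fun f => {v | G.connectedComponentMk v ∈ f}
    with hΦ
  have hΦinj : Function.Injective Φ := by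
    intro f g h
    ext c
    obtain ⟨v, rfl⟩ := c.exists_rep
    constructor
    · intro hv
      have : v ∈ Φ f := hv
      rw [h] at this; exact this
    · intro hv
      have : v ∈ Φ g := hv
      rw [← h] at this; exact this
  set T : Set (Set G.ConnectedComponent) := {f | ∀ c, c ∉ Free → c ∈ f} with hT
  have himg : {A : Set V | (∀ u v, G.Adj u v → (u ∈ A ↔ v ∈ A)) ∧
      (∀ v, (∀ w, ¬ G.Adj v w) → v ∈ A) ∧ ∀ e ∈ M, ∀ a ∈ e, a ∈ A} = Φ '' T := by
    ext A
    constructor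
    · rintro ⟨h1, h2, h3⟩
      refine ⟨{c | ∃ v, G.connectedComponentMk v = c ∧ v ∈ A}, ?_, ?_⟩
      · intro c hc
        obtain ⟨v, rfl⟩ := c.exists_rep
        by_cases hhit : ∃ e ∈ M, ∃ a, a ∈ e ∧ G.connectedComponentMk a =
            G.connectedComponentMk v
        · obtain ⟨e, he, a, hae, hac⟩ := hhit
          exact ⟨a, hac, h3 e he a hae⟩
        · have hiso : ∀ w, ¬ G.Adj v w := by
            intro w hw
            exact hc ⟨⟨v, w, hw, rfl⟩, hhit⟩
          exact ⟨v, rfl, h2 v hiso⟩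
      · ext v
        simp only [hΦ, Set.mem_setOf_eq]
        constructor
        · rintro ⟨w, hw, hwA⟩
          exact (reach_iff G h1 (ConnectedComponent.exact hw)).mp hwA
        · intro hv; exact ⟨v, rfl, hv⟩
    · rintro ⟨f, hf, rfl⟩
      refine ⟨?_, ?_, ?_⟩
      · intro u v huv
        have : G.connectedComponentMk u = G.connectedComponentMk v :=
          ConnectedComponent.sound huv.reachable
        simp only [hΦ, Set.mem_setOf_eq, this]
      · intro v hv
        refine hf _ ?_
        rintro ⟨⟨a, b, hab, hac⟩, -⟩
        obtain ⟨p⟩ := (ConnectedComponent.exact hac).symm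
        cases p with
        | nil => exact hv b hab
        | cons h _ => exact hv _ h
      · intro e he a hae
        refine hf _ ?_
        rintro ⟨-, hnh⟩
        exact hnh ⟨e, he, a, hae, rfl⟩
  rw [himg, Set.ncard_image_of_injective _ hΦinj]
  -- now count T
  set Ψ : Set (↥Free) → Set G.ConnectedComponent :=
    fun g => {c | c ∉ Free ∨ ∃ h : c ∈ Free, (⟨c, h⟩ : ↥Free) ∈ g} with hΨ
  have hΨinj : Function.Injective Ψ := by
    intro g g' h
    ext ⟨c, hc⟩
    have h1 : c ∈ Ψ g ↔ c ∈ Ψ g' := by rw [h]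
    simp only [hΨ, Set.mem_setOf_eq] at h1
    constructor
    · intro hg
      rcases h1.mp (Or.inr ⟨hc, hg⟩) with h' | ⟨h2, hg'⟩
      · exact absurd hc h'
      · exact hg'
    · intro hg
      rcases h1.mpr (Or.inr ⟨hc, hg⟩) with h' | ⟨h2, hg'⟩
      · exact absurd hc h'
      · exact hg'
  have hTimg : T = Ψ '' Set.univ := by
    ext f
    constructor
    · intro hf
      refine ⟨{x | (x : G.ConnectedComponent) ∈ f}, Set.mem_univ _, ?_⟩
      ext c
      simp only [hΨ, Set.mem_setOf_eq]
      constructor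
      · rintro (hc | ⟨h, hc⟩)
        · exact hf c hc
        · exact hc
      · intro hc
        by_cases h : c ∈ Free
        · exact Or.inr ⟨h, hc⟩
        · exact Or.inl h
    · rintro ⟨g, -, rfl⟩
      intro c hc
      exact Or.inl hc
  rw [hTimg, Set.ncard_image_of_injective _ hΨinj, Set.ncard_univ]
  have : Fintype ↥Free := Fintype.ofFinite _
  rw [Nat.card_eq_fintype_card, Fintype.card_set, Nat.card_eq_fintype_card]

/-- if the marker set `M` hits every non-isolate component, exactly one
consistent cut is compatible with `M`; otherwise the number of compatible consistent
cuts is even and positive. Cuts are identified with their first side `A = V₁`. -/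
theorem stmt8 {V : Type*} [Fintype V] (G : SimpleGraph V) (M : Set (Sym2 V))
    (hM : M ⊆ G.edgeSet) :
    ((∀ c : G.ConnectedComponent, (∃ a b, G.Adj a b ∧ G.connectedComponentMk a = c) →
        ∃ e ∈ M, ∃ a, a ∈ e ∧ G.connectedComponentMk a = c) →
      {A : Set V | (∀ u v, G.Adj u v → (u ∈ A ↔ v ∈ A)) ∧
          (∀ v, (∀ w, ¬ G.Adj v w) → v ∈ A) ∧ ∀ e ∈ M, ∀ a ∈ e, a ∈ A}.ncard = 1) ∧
    ((∃ c : G.ConnectedComponent, (∃ a b, G.Adj a b ∧ G.connectedComponentMk a = c) ∧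
        ¬ ∃ e ∈ M, ∃ a, a ∈ e ∧ G.connectedComponentMk a = c) →
      Even {A : Set V | (∀ u v, G.Adj u v → (u ∈ A ↔ v ∈ A)) ∧
          (∀ v, (∀ w, ¬ G.Adj v w) → v ∈ A) ∧ ∀ e ∈ M, ∀ a ∈ e, a ∈ A}.ncard ∧
      0 < {A : Set V | (∀ u v, G.Adj u v → (u ∈ A ↔ v ∈ A)) ∧
          (∀ v, (∀ w, ¬ G.Adj v w) → v ∈ A) ∧ ∀ e ∈ M, ∀ a ∈ e, a ∈ A}.ncard) := by
  classical
  have hk := key_count G M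
  constructor
  · intro hall
    have hFree : {c : G.ConnectedComponent |
        (∃ a b, G.Adj a b ∧ G.connectedComponentMk a = c) ∧
        ¬ ∃ e ∈ M, ∃ a, a ∈ e ∧ G.connectedComponentMk a = c} = ∅ := by
      ext c
      simp only [Set.mem_setOf_eq, Set.mem_empty_iff_false, iff_false, not_and, not_not]
      exact hall c
    rw [hk, hFree]
    simp
  · intro ⟨c, hc1, hc2⟩
    have hne : Nonempty ↥{c : G.ConnectedComponent |
        (∃ a b, G.Adj a b ∧ G.connectedComponentMk a = c) ∧
        ¬ ∃ e ∈ M, ∃ a, a ∈ e ∧ G.connectedComponentMk a = c} := ⟨⟨c, hc1, hc2⟩⟩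
    have hpos : 0 < Nat.card ↥{c : G.ConnectedComponent |
        (∃ a b, G.Adj a b ∧ G.connectedComponentMk a = c) ∧
        ¬ ∃ e ∈ M, ∃ a, a ∈ e ∧ G.connectedComponentMk a = c} := Nat.card_pos
    rw [hk]
    exact ⟨Nat.even_pow.mpr ⟨even_two, hpos.ne'⟩, pow_pos two_pos _⟩
end

section
/- Isolation Lemma: Let F be a nonempty family of subsets of a finite universe U. If each element u ∈ U is assigned a weight ω(u) chosen uniformly and independently at random from {1, 2, …, N}, then the probability that there is a unique set S' ∈ F of minimum total weight ω(S') = Σ_{x∈S'} ω(x) is at least 1 − |U|/N. -/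
open scoped Classical

section IsoAux

variable {U : Type*} [Fintype U] [DecidableEq U] {N : ℕ}

/-- total weight of a set -/
def isoWt (ω : U → Fin N) (S : Finset U) : ℕ := ∑ x ∈ S, ((ω x : ℕ) + 1)

lemma isoWt_eq_of_not_mem {ω ω' : U → Fin N} {u : U}
    (h : ∀ x, x ≠ u → ω x = ω' x) {X : Finset U} (hu : u ∉ X) :
    isoWt ω X = isoWt ω' X := by
  refine Finset.sum_congr rfl fun x hx => ?_
  have hxu : x ≠ u := fun hxe => hu (hxe ▸ hx)
  rw [h x hxu]

lemma isoWt_erase {ω : U → Fin N} {u : U} {X : Finset U} (hu : u ∈ X) :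
    ((ω u : ℕ) + 1) + isoWt ω (X.erase u) = isoWt ω X := by
  simp only [isoWt]
  exact Finset.add_sum_erase _ (fun x => (ω x : ℕ) + 1) hu

/-- key counting bound: the set of weightings for which `u` is "singular"
has cardinality at most `N ^ (|U| - 1)`. -/
lemma iso_key (N : ℕ) (F : Finset (Finset U)) (u : U) :
    (Finset.univ.filter (fun ω : U → Fin N =>
      ∃ S1 ∈ F, ∃ S2 ∈ F, (∀ T ∈ F, isoWt ω S1 ≤ isoWt ω T) ∧
        (∀ T ∈ F, isoWt ω S2 ≤ isoWt ω T) ∧ u ∈ S1 ∧ u ∉ S2)).card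
      ≤ N ^ (Fintype.card U - 1) := by
  have hcard : Fintype.card ({x : U // x ≠ u} → Fin N) = N ^ (Fintype.card U - 1) := by
    rw [Fintype.card_fun, Fintype.card_fin]
    congr 1
    rw [Fintype.card_subtype_compl, Fintype.card_subtype_eq]
  calc (Finset.univ.filter (fun ω : U → Fin N =>
      ∃ S1 ∈ F, ∃ S2 ∈ F, (∀ T ∈ F, isoWt ω S1 ≤ isoWt ω T) ∧
        (∀ T ∈ F, isoWt ω S2 ≤ isoWt ω T) ∧ u ∈ S1 ∧ u ∉ S2)).card
      ≤ (Finset.univ : Finset ({x : U // x ≠ u} → Fin N)).card := by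
        apply Finset.card_le_card_of_injOn
          (fun ω => fun x : {x : U // x ≠ u} => ω x.1)
          (fun _ _ => Finset.mem_univ _)
        intro ω hω ω' hω' hres
        simp only [Finset.mem_coe, Finset.mem_filter] at hω hω'
        obtain ⟨-, S1, hS1, S2, hS2, hmin1, hmin2, huS1, huS2⟩ := hω
        obtain ⟨-, T1, hT1, T2, hT2, hmin1', hmin2', huT1, huT2⟩ := hω'
        have hres' : ∀ x, x ≠ u → ω x = ω' x := by
          intro x hx
          exact congrFun hres ⟨x, hx⟩
        -- abbreviations
        have e1 : ((ω u : ℕ) + 1) + isoWt ω (S1.erase u) = isoWt ω S1 := isoWt_erase huS1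
        have e1' : ((ω' u : ℕ) + 1) + isoWt ω' (T1.erase u) = isoWt ω' T1 := isoWt_erase huT1
        have eT1 : ((ω u : ℕ) + 1) + isoWt ω (T1.erase u) = isoWt ω T1 := isoWt_erase huT1
        have eS1 : ((ω' u : ℕ) + 1) + isoWt ω' (S1.erase u) = isoWt ω' S1 := isoWt_erase huS1
        -- weights of sets not containing u agree under ω and ω'
        have hc : isoWt ω (S1.erase u) = isoWt ω' (S1.erase u) :=
          isoWt_eq_of_not_mem hres' (Finset.notMem_erase u S1)
        have hc' : isoWt ω (T1.erase u) = isoWt ω' (T1.erase u) :=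
          isoWt_eq_of_not_mem hres' (Finset.notMem_erase u T1)
        have hb : isoWt ω S2 = isoWt ω' S2 := isoWt_eq_of_not_mem hres' huS2
        have hb' : isoWt ω T2 = isoWt ω' T2 := isoWt_eq_of_not_mem hres' huT2
        -- minimality relations
        have h12 : isoWt ω S1 = isoWt ω S2 := le_antisymm (hmin1 S2 hS2) (hmin2 S1 hS1)
        have h12' : isoWt ω' T1 = isoWt ω' T2 := le_antisymm (hmin1' T2 hT2) (hmin2' T1 hT1)
        have hST : isoWt ω S1 ≤ isoWt ω T1 := hmin1 T1 hT1
        have hTS : isoWt ω' T1 ≤ isoWt ω' S1 := hmin1' S1 hS1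
        have hS2T2 : isoWt ω S2 ≤ isoWt ω T2 := hmin2 T2 hT2
        have hT2S2 : isoWt ω' T2 ≤ isoWt ω' S2 := hmin2' S2 hS2
        have huu : (ω u : ℕ) = (ω' u : ℕ) := by omega
        have huu' : ω u = ω' u := Fin.ext huu
        funext x
        by_cases hx : x = u
        · rw [hx]; exact huu'
        · exact hres' x hx
    _ = N ^ (Fintype.card U - 1) := by rw [Finset.card_univ, hcard]

end IsoAux

/-- Isolation Lemma: for i.i.d. uniform weights in `{1, …, N}`
(encoded as `ω : U → Fin N` with weight `ω u + 1`), the probability that a nonempty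
family `F` of subsets of `U` has a unique minimum-weight member is at least
`1 - |U| / N`. -/
theorem stmt12 {U : Type*} [Fintype U] [DecidableEq U] (N : ℕ) (hN : 0 < N)
    (F : Finset (Finset U)) (hF : F.Nonempty) :
    (1 : ℚ) - (Fintype.card U : ℚ) / N ≤
      ((Finset.univ.filter (fun ω : U → Fin N =>
          ∃! S' : Finset U, S' ∈ F ∧
            ∀ S ∈ F, (∑ x ∈ S', ((ω x : ℕ) + 1)) ≤ ∑ x ∈ S, ((ω x : ℕ) + 1))).card : ℚ) /
        (N ^ Fintype.card U : ℕ) := by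
  set n := Fintype.card U with hn
  set P : (U → Fin N) → Prop := fun ω =>
    ∃! S' : Finset U, S' ∈ F ∧
      ∀ S ∈ F, (∑ x ∈ S', ((ω x : ℕ) + 1)) ≤ ∑ x ∈ S, ((ω x : ℕ) + 1) with hP
  set Good := Finset.univ.filter P with hGood
  set Bad := Finset.univ.filter (fun ω => ¬ P ω) with hBad
  set BadU : U → Finset (U → Fin N) := fun u => Finset.univ.filter (fun ω : U → Fin N =>
      ∃ S1 ∈ F, ∃ S2 ∈ F, (∀ T ∈ F, isoWt ω S1 ≤ isoWt ω T) ∧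
        (∀ T ∈ F, isoWt ω S2 ≤ isoWt ω T) ∧ u ∈ S1 ∧ u ∉ S2) with hBadU
  -- Bad is contained in the union of BadU u
  have hsub : Bad ⊆ Finset.univ.biUnion BadU := by
    intro ω hω
    rw [hBad, Finset.mem_filter] at hω
    obtain ⟨-, hbad⟩ := hω
    obtain ⟨S0, hS0, hmin⟩ := F.exists_min_image (isoWt ω) hF
    have hPS0 : S0 ∈ F ∧ ∀ S ∈ F, (∑ x ∈ S0, ((ω x : ℕ) + 1)) ≤ ∑ x ∈ S, ((ω x : ℕ) + 1) :=
      ⟨hS0, hmin⟩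
    have : ∃ S', (S' ∈ F ∧ ∀ S ∈ F,
        (∑ x ∈ S', ((ω x : ℕ) + 1)) ≤ ∑ x ∈ S, ((ω x : ℕ) + 1)) ∧ S' ≠ S0 := by
      by_contra h
      push_neg at h
      exact hbad ⟨S0, hPS0, h⟩
    obtain ⟨S', hPS', hne⟩ := this
    have : ∃ u, (u ∈ S0 ∧ u ∉ S') ∨ (u ∈ S' ∧ u ∉ S0) := by
      by_contra h
      push_neg at h
      apply hne
      ext a
      have := h a
      tauto
    obtain ⟨u, hu⟩ := this
    refine Finset.mem_biUnion.2 ⟨u, Finset.mem_univ u, ?_⟩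
    rw [hBadU]
    simp only [Finset.mem_filter, Finset.mem_univ, true_and]
    rcases hu with ⟨h1, h2⟩ | ⟨h1, h2⟩
    · exact ⟨S0, hS0, S', hPS'.1, hmin, hPS'.2, h1, h2⟩
    · exact ⟨S', hPS'.1, S0, hS0, hPS'.2, hmin, h1, h2⟩
  have hBadCard : Bad.card ≤ n * N ^ (n - 1) := by
    calc Bad.card ≤ (Finset.univ.biUnion BadU).card := Finset.card_le_card hsub
      _ ≤ ∑ u : U, (BadU u).card := Finset.card_biUnion_le
      _ ≤ ∑ _u : U, N ^ (n - 1) := Finset.sum_le_sum fun u _ => iso_key N F u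
      _ = n * N ^ (n - 1) := by rw [Finset.sum_const, Finset.card_univ, smul_eq_mul]
  have htotal : Good.card + Bad.card = N ^ n := by
    rw [hGood, hBad, Finset.card_filter_add_card_filter_not, Finset.card_univ,
      Fintype.card_fun, Fintype.card_fin]
  -- now the rational arithmetic
  have hkey : (N : ℕ) ^ n ≤ Good.card + n * N ^ (n - 1) := by omega
  have hNpos : (0 : ℚ) < (N : ℚ) := by exact_mod_cast hN
  have hNn : (0 : ℚ) < (N : ℚ) ^ n := by positivity
  have hq : ((N : ℚ) ^ n) ≤ (Good.card : ℚ) + (n : ℚ) * (N : ℚ) ^ (n - 1) := by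
    exact_mod_cast hkey
  have hfrac : (n : ℚ) * (N : ℚ) ^ (n - 1) / (N : ℚ) ^ n ≤ (n : ℚ) / (N : ℚ) := by
    rw [div_le_div_iff₀ hNn hNpos]
    cases n with
    | zero => simp
    | succ m =>
      have hm : m + 1 - 1 = m := rfl
      rw [hm, pow_succ]
      exact le_of_eq (by ring)
  have h1 : (1 : ℚ) ≤ (Good.card : ℚ) / (N : ℚ) ^ n + (n : ℚ) / (N : ℚ) := by
    have h2 : (1 : ℚ) ≤ ((Good.card : ℚ) + (n : ℚ) * (N : ℚ) ^ (n - 1)) / (N : ℚ) ^ n := by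
      rw [le_div_iff₀ hNn]
      linarith
    rw [add_div] at h2
    linarith
  have hcast : ((N ^ n : ℕ) : ℚ) = (N : ℚ) ^ n := by push_cast; ring
  rw [hcast]
  linarith
end

section
/- Let G be a graph and P = v₀v₁…v_{h−1}v_h a degree-two-path with h ≥ 4 (v₀ and v_h have degree ≠ 2, and v₁,…,v_{h−1} have degree 2). Let G' be obtained from G by deleting v₂ and its incident edges v₁v₂, v₂v₃ and adding the edge v₁v₃. Then G has a set S of at most k vertices such that G − S is a disjoint union of paths if and only if G' has such a set. -/
/-!
Let `c = v₂`, whose neighbours `v₁, v₃` are distinct and non-adjacent. For a set `S` avoiding `c`,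
a cycle of `G - S` either avoids `c` or runs through `v₁ c v₃`, which in `G' - S` is replaced by the
edge `v₁v₃`, and vice versa; so `G - S` is acyclic iff `G' - S` is. Degrees do not grow when passing
to `G'`, since `v₁` and `v₃` exchange the neighbour `c` for each other, and back in `G` only
`v₁, v₂, v₃`, all of degree two, can gain a neighbour. Finally a solution of `G` containing `c` may
trade `c` for `v₁`: then `c` becomes a leaf and `v₃` keeps degree at most two.
-/

namespace SimpleGraph

variable {V W : Type*} {G : SimpleGraph V}

lemma Reachable.lift {H : SimpleGraph W} (f : V → W)
    (hf : ∀ ⦃u v⦄, G.Adj u v → H.Reachable (f u) (f v)) {u v : V} (h : G.Reachable u v) :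
    H.Reachable (f u) (f v) := by
  rw [reachable_eq_reflTransGen] at h hf ⊢
  exact Relation.ReflTransGen.lift' f hf _ _ h

lemma Walk.IsCycle.induce {s : Set V} {u : V} {p : G.Walk u u} (hp : p.IsCycle)
    (hs : ∀ x ∈ p.support, x ∈ s) : (p.induce s hs).IsCycle :=
  .of_map (f := (Embedding.induce s).toHom) (by rwa [Walk.map_induce])

lemma Walk.IsCycle.exists_adj_adj_walk_notMem_support {c : V} {p : G.Walk c c}
    (hp : p.IsCycle) :
    ∃ x y, G.Adj c x ∧ G.Adj c y ∧ x ≠ y ∧ ∃ r : G.Walk x y, c ∉ r.support := by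
  cases p with
  | nil => exact absurd hp Walk.not_isCycle_nil
  | @cons _ x _ hx q =>
    obtain ⟨hq, hcx⟩ := (Walk.cons_isCycle_iff q hx).mp hp
    obtain ⟨y, hy, r, hr⟩ := Walk.not_nil_iff.mp (fun h => hx.ne h.eq : ¬ q.reverse.Nil)
    have hpath : (Walk.cons hy r).IsPath := hr ▸ hq.reverse
    refine ⟨y, x, hy, hx, ?_, r, ((Walk.cons_isPath_iff hy r).mp hpath).2⟩
    rintro rfl
    apply hcx
    rw [← List.mem_reverse, ← Walk.edges_reverse, hr]
    simp

/-- Suppressing `c` (delete it and join its neighbours); for `c = v₂` this is the graph `G'`. -/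
def bypass (G : SimpleGraph V) (c : V) : SimpleGraph {x // x ≠ c} where
  Adj x y := G.Adj x y ∨ x ≠ y ∧ G.Adj c x ∧ G.Adj c y
  symm.symm x y := by
    rintro (h | ⟨hne, hx, hy⟩)
    exacts [Or.inl h.symm, Or.inr ⟨hne.symm, hy, hx⟩]
  loopless.irrefl x := by
    rintro (h | ⟨hne, -⟩)
    exacts [h.ne rfl, hne rfl]

lemma bypass_adj {c : V} {x y : {x // x ≠ c}} :
    (G.bypass c).Adj x y ↔ G.Adj x y ∨ x ≠ y ∧ G.Adj c x ∧ G.Adj c y := Iff.rfl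

lemma isAcyclic_of_isAcyclic_bypass {c : V} (htri : ∀ ⦃x y⦄, G.Adj c x → G.Adj c y → ¬ G.Adj x y)
    (hB : (G.bypass c).IsAcyclic) : G.IsAcyclic := by
  classical
  intro u p hp
  by_cases hcp : c ∈ p.support
  · obtain ⟨x, y, hx, hy, hxy, r, hr⟩ := (hp.rotate hcp).exists_adj_adj_walk_notMem_support
    let x' : {x // x ≠ c} := ⟨x, hx.ne'⟩
    let y' : {x // x ≠ c} := ⟨y, hy.ne'⟩
    let ι : G.induce {x | x ≠ c} →g (G.bypass c).deleteEdges {s(x', y')} :=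
      ⟨id, fun {a b} hab => deleteEdges_adj.mpr ⟨Or.inl hab, fun he => htri hx hy (by
        rcases Sym2.eq_iff.mp (Set.mem_singleton_iff.mp he) with ⟨rfl, rfl⟩ | ⟨rfl, rfl⟩
        exacts [hab, hab.symm])⟩⟩
    have hr' : (G.induce {x | x ≠ c}).Reachable x' y' :=
      (r.induce _ fun z hz => ne_of_mem_of_not_mem hz hr).reachable
    obtain ⟨_, q, hq, -⟩ := adj_and_reachable_delete_edges_iff_exists_cycle.mp
      ⟨Or.inr ⟨fun h => hxy (congrArg Subtype.val h), hx, hy⟩, hr'.map ι⟩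
    exact hB q hq
  · have hs : ∀ x ∈ p.support, x ∈ {x | x ≠ c} := fun x hx => ne_of_mem_of_not_mem hx hcp
    let ι : G.induce {x | x ≠ c} →g G.bypass c := ⟨id, fun h => Or.inl h⟩
    exact hB.comap ι (fun _ _ => id) _ (hp.induce hs)

lemma isAcyclic_bypass_of_isAcyclic {c : V}
    (hdeg : ∀ ⦃x y z⦄, G.Adj c x → G.Adj c y → G.Adj c z → x = y ∨ x = z ∨ y = z)
    (hG : G.IsAcyclic) : (G.bypass c).IsAcyclic := by
  rw [isAcyclic_iff_forall_adj_isBridge]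
  intro x y hxy hreach
  by_cases hGxy : G.Adj x y
  · -- a new edge of `G.bypass c` is replaced by the path through `c`
    refine isAcyclic_iff_forall_adj_isBridge.mp hG hGxy (hreach.lift Subtype.val ?_)
    intro u v huv
    obtain ⟨huv | ⟨-, hu, hv⟩, hne⟩ := deleteEdges_adj.mp huv
    · refine (deleteEdges_adj.mpr ⟨huv, ?_⟩).reachable
      simpa [Sym2.eq_iff, Subtype.ext_iff] using hne
    · have hux : (G.deleteEdges {s(↑x, ↑y)}).Adj u c :=
        deleteEdges_adj.mpr ⟨hu.symm, by simp [x.2.symm, y.2.symm]⟩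
      have hcv : (G.deleteEdges {s(↑x, ↑y)}).Adj c v :=
        deleteEdges_adj.mpr ⟨hv, by simp [x.2.symm, y.2.symm]⟩
      exact hux.reachable.trans hcv.reachable
  · -- by `hdeg`, `xy` is the only new edge, so the cycle through it closes up via `c` in `G`
    obtain ⟨hxy, hx, hy⟩ := hxy.resolve_left hGxy
    have hxy' : (G.deleteEdges {s(c, ↑x)}).Reachable x y := by
      refine hreach.lift Subtype.val ?_
      intro u v huv
      obtain ⟨huv | ⟨huv, hu, hv⟩, hne⟩ := deleteEdges_adj.mp huv
      · exact (deleteEdges_adj.mpr ⟨huv, by simp [u.2, v.2]⟩).reachable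
      · have := hdeg hu hv hx
        have := hdeg hu hv hy
        simp only [Set.mem_singleton_iff, Sym2.eq_iff, Subtype.ext_iff] at hne
        grind
    have hcy : (G.deleteEdges {s(c, ↑x)}).Adj c y :=
      deleteEdges_adj.mpr ⟨hy, by simpa [x.2.symm, Subtype.ext_iff, eq_comm] using hxy⟩
    exact isAcyclic_iff_forall_adj_isBridge.mp hG hx (hcy.reachable.trans hxy'.symm)

lemma isAcyclic_bypass_iff {c : V}
    (hdeg : ∀ ⦃x y z⦄, G.Adj c x → G.Adj c y → G.Adj c z → x = y ∨ x = z ∨ y = z)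
    (htri : ∀ ⦃x y⦄, G.Adj c x → G.Adj c y → ¬ G.Adj x y) : (G.bypass c).IsAcyclic ↔ G.IsAcyclic :=
  ⟨isAcyclic_of_isAcyclic_bypass htri, isAcyclic_bypass_of_isAcyclic hdeg⟩

def bypassInduceIso {c : V} (s : Set V) (hc : c ∈ s) :
    (G.bypass c).induce (Subtype.val ⁻¹' s) ≃g (G.induce s).bypass ⟨c, hc⟩ where
  toFun x := ⟨⟨x.1.1, x.2⟩, fun h => x.1.2 (congrArg Subtype.val h)⟩
  invFun x := ⟨⟨x.1.1, fun h => x.2 (Subtype.ext h)⟩, x.1.2⟩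
  left_inv _ := rfl
  right_inv _ := rfl
  map_rel_iff' := by
    intro x y
    simp [bypass_adj, Subtype.ext_iff]

lemma isAcyclic_induce_bypass_iff {c : V}
    (hdeg : ∀ ⦃x y z⦄, G.Adj c x → G.Adj c y → G.Adj c z → x = y ∨ x = z ∨ y = z)
    (htri : ∀ ⦃x y⦄, G.Adj c x → G.Adj c y → ¬ G.Adj x y) {s : Set V} (hc : c ∈ s) :
    ((G.bypass c).induce (Subtype.val ⁻¹' s)).IsAcyclic ↔ (G.induce s).IsAcyclic :=
  (bypassInduceIso s hc).isAcyclic_iff.trans <| isAcyclic_bypass_iff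
    (fun _ _ _ hx hy hz => by simpa [Subtype.ext_iff] using hdeg hx hy hz)
    (fun _ _ hx hy => htri hx hy)

lemma isAcyclic_of_isAcyclic_induce_of_subsingleton {c : V}
    (hc : (G.neighborSet c).Subsingleton) (h : (G.induce {x | x ≠ c}).IsAcyclic) :
    G.IsAcyclic := by
  refine isAcyclic_of_isAcyclic_bypass (fun x y hx hy => hc hx hy ▸ G.loopless.irrefl x) ?_
  refine h.comap ⟨id, fun {x y} hxy => ?_⟩ fun _ _ => id
  rcases hxy with hxy | ⟨hne, hx, hy⟩
  exacts [hxy, absurd (Subtype.ext (hc hx hy)) hne]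

lemma ncard_bypass_adj_le [Finite V] {c : V}
    (hdeg : ∀ ⦃x y z⦄, G.Adj c x → G.Adj c y → G.Adj c z → x = y ∨ x = z ∨ y = z)
    {S : Set V} (hcS : c ∉ S) (x : {x // x ≠ c}) :
    {w | (G.bypass c).Adj x w ∧ w ∉ Subtype.val ⁻¹' S}.ncard ≤ {w | G.Adj x w ∧ w ∉ S}.ncard := by
  classical
  -- a new neighbour of `x` takes the place of `c`; by `hdeg` there is at most one
  refine Set.ncard_le_ncard_of_injOn (fun w => if G.Adj x w then (w : V) else c) ?_ ?_
  · rintro w ⟨hw, hwS⟩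
    split_ifs with h
    · exact ⟨h, hwS⟩
    · exact ⟨(hw.resolve_left h).2.1.symm, hcS⟩
  · rintro w₁ ⟨hw₁, -⟩ w₂ ⟨hw₂, -⟩ heq
    dsimp only at heq
    split_ifs at heq with h₁ h₂ h₂
    · exact Subtype.ext heq
    · exact absurd heq w₁.2
    · exact absurd heq.symm w₂.2
    · obtain ⟨hne₁, hx, hc₁⟩ := hw₁.resolve_left h₁
      obtain ⟨hne₂, -, hc₂⟩ := hw₂.resolve_left h₂
      rcases hdeg hx hc₁ hc₂ with h | h | h
      · exact absurd (Subtype.ext h) hne₁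
      · exact absurd (Subtype.ext h) hne₂
      · exact Subtype.ext h

lemma ncard_adj_le_ncard_bypass_adj [Finite V] {c x : V} (hx : ¬ G.Adj c x) (hxc : x ≠ c)
    (S : Set V) :
    {w | G.Adj x w ∧ w ∉ S}.ncard ≤
      {w | (G.bypass c).Adj ⟨x, hxc⟩ w ∧ w ∉ Subtype.val ⁻¹' S}.ncard := by
  refine (Set.ncard_le_ncard ?_).trans (Set.ncard_image_le (f := Subtype.val))
  rintro w ⟨hxw, hwS⟩
  exact ⟨⟨w, fun h => hx (h ▸ hxw.symm)⟩, ⟨Or.inl hxw, hwS⟩, rfl⟩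

lemma neighborSet_eq_pair [Finite V] {x y z : V} (hy : G.Adj x y) (hz : G.Adj x z) (hyz : y ≠ z)
    (h2 : (G.neighborSet x).ncard = 2) : G.neighborSet x = {y, z} :=
  (Set.eq_of_subset_of_ncard_le (by rintro w (rfl | rfl) <;> assumption)
    (by rw [h2, Set.ncard_pair hyz])).symm

lemma eq_bypass_of_neighborSet_eq_pair {a b c : V} (hc : G.neighborSet c = {a, b}) (hab : a ≠ b)
    {H : SimpleGraph {x // x ≠ c}}
    (hH : ∀ x y, H.Adj x y ↔ G.Adj x y ∨ (↑x = a ∧ ↑y = b) ∨ (↑x = b ∧ ↑y = a)) :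
    H = G.bypass c := by
  have hadj : ∀ z, G.Adj c z ↔ z = a ∨ z = b := fun z => by
    rw [← mem_neighborSet, hc]; rfl
  ext x y
  rw [hH, bypass_adj, hadj, hadj, ne_eq, Subtype.ext_iff]
  grind

lemma eq_or_eq_or_eq_of_neighborSet_subset_pair {a b c : V} (hc : G.neighborSet c ⊆ {a, b})
    ⦃x y z : V⦄ (hx : G.Adj c x) (hy : G.Adj c y) (hz : G.Adj c z) : x = y ∨ x = z ∨ y = z := by
  rcases hc hx with rfl | rfl <;> rcases hc hy with rfl | rfl <;> rcases hc hz with rfl | rfl <;>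
    simp

lemma not_adj_of_neighborSet_subset_pair {a b c : V} (hc : G.neighborSet c ⊆ {a, b})
    (hab : ¬ G.Adj a b) ⦃x y : V⦄ (hx : G.Adj c x) (hy : G.Adj c y) : ¬ G.Adj x y := by
  rcases hc hx with rfl | rfl <;> rcases hc hy with rfl | rfl
  exacts [G.loopless.irrefl _, hab, fun h => hab h.symm, G.loopless.irrefl _]

def IsCPPSet (G : SimpleGraph V) (S : Set V) : Prop :=
  (∀ x ∉ S, {w | G.Adj x w ∧ w ∉ S}.ncard ≤ 2) ∧ (G.induce Sᶜ).IsAcyclic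

lemma IsCPPSet.exists_notMem [Finite V] {a b c : V} (hc : G.neighborSet c ⊆ {a, b})
    (hac : a ≠ c) (hb : (G.neighborSet b).ncard ≤ 2) {S : Set V} (hS : G.IsCPPSet S) :
    ∃ T, G.IsCPPSet T ∧ T.ncard ≤ S.ncard ∧ c ∉ T := by
  by_cases hcS : c ∉ S
  · exact ⟨S, hS, le_rfl, hcS⟩
  rw [not_not] at hcS
  set T := insert a (S \ {c})
  have hcT : c ∉ T := by simp [T, hac.symm]
  have hsub : ∀ x ∉ T, x ≠ c → x ∉ S := fun x hx hxc hxS =>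
    hx (Set.mem_insert_of_mem _ ⟨hxS, hxc⟩)
  have hnbc : ∀ x ∉ T, G.Adj c x → x = b := fun x hx hcx =>
    (hc hcx).resolve_left fun h => hx (h ▸ Set.mem_insert a _)
  refine ⟨T, ⟨fun x hx => ?_, ?_⟩, ?_, hcT⟩
  · by_cases hxc : x = c
    · subst hxc
      calc {w | G.Adj x w ∧ w ∉ T}.ncard ≤ ({b} : Set V).ncard :=
            Set.ncard_le_ncard fun w hw => hnbc w hw.2 hw.1
        _ ≤ 2 := by simp
    by_cases hxb : x = b
    · exact (Set.ncard_le_ncard fun w hw => hw.1).trans (hxb ▸ hb)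
    refine (Set.ncard_le_ncard ?_).trans (hS.1 x (hsub x hx hxc))
    rintro w ⟨hxw, hwT⟩
    exact ⟨hxw, hsub w hwT fun hwc => hxb (hnbc x hx (hwc ▸ hxw.symm))⟩
  · refine isAcyclic_of_isAcyclic_induce_of_subsingleton (c := ⟨c, hcT⟩)
      (fun x hx y hy => Subtype.ext ((hnbc x x.2 hx).trans (hnbc y y.2 hy).symm)) ?_
    refine hS.2.comap ⟨fun z => ⟨z.1.1, hsub z.1 z.1.2 fun h => z.2 (Subtype.ext h)⟩, id⟩ ?_
    intro z₁ z₂ h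
    have h' := Subtype.ext_iff.mp h
    exact Subtype.ext (Subtype.ext h')
  · exact (Set.ncard_insert_le _ _).trans (Set.ncard_sdiff_singleton_add_one hcS).le

lemma IsCPPSet.bypass [Finite V] {c : V}
    (hdeg : ∀ ⦃x y z⦄, G.Adj c x → G.Adj c y → G.Adj c z → x = y ∨ x = z ∨ y = z)
    (htri : ∀ ⦃x y⦄, G.Adj c x → G.Adj c y → ¬ G.Adj x y) {S : Set V} (hS : G.IsCPPSet S)
    (hcS : c ∉ S) : (G.bypass c).IsCPPSet (Subtype.val ⁻¹' S) :=
  ⟨fun x hx => (ncard_bypass_adj_le hdeg hcS x).trans (hS.1 x hx),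
    (isAcyclic_induce_bypass_iff hdeg htri hcS).mpr hS.2⟩

lemma IsCPPSet.of_bypass [Finite V] {c : V}
    (hdeg : ∀ ⦃x y z⦄, G.Adj c x → G.Adj c y → G.Adj c z → x = y ∨ x = z ∨ y = z)
    (htri : ∀ ⦃x y⦄, G.Adj c x → G.Adj c y → ¬ G.Adj x y)
    (hloc : ∀ x, x = c ∨ G.Adj c x → (G.neighborSet x).ncard ≤ 2) {S : Set V} (hcS : c ∉ S)
    (hS : (G.bypass c).IsCPPSet (Subtype.val ⁻¹' S)) : G.IsCPPSet S := by
  refine ⟨fun x hx => ?_, (isAcyclic_induce_bypass_iff hdeg htri hcS).mp hS.2⟩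
  by_cases hxc : x = c ∨ G.Adj c x
  · exact (Set.ncard_le_ncard fun w hw => hw.1).trans (hloc x hxc)
  · push Not at hxc
    exact (ncard_adj_le_ncard_bypass_adj hxc.2 hxc.1 S).trans (hS.1 _ hx)

theorem exists_isCPPSet_iff_bypass [Finite V] {a b c : V} (hc : G.neighborSet c = {a, b})
    (hab : a ≠ b) (hnadj : ¬ G.Adj a b) (ha : (G.neighborSet a).ncard ≤ 2)
    (hb : (G.neighborSet b).ncard ≤ 2) (k : ℕ) :
    (∃ S, S.ncard ≤ k ∧ G.IsCPPSet S) ↔ ∃ S, S.ncard ≤ k ∧ (G.bypass c).IsCPPSet S := by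
  have hdeg := eq_or_eq_or_eq_of_neighborSet_subset_pair hc.subset
  have htri := not_adj_of_neighborSet_subset_pair hc.subset hnadj
  have hac : a ≠ c := (show a ∈ G.neighborSet c from hc ▸ Set.mem_insert a _).ne'
  constructor
  · rintro ⟨S, hSk, hS⟩
    obtain ⟨T, hT, hTS, hcT⟩ := hS.exists_notMem (Set.pair_comm a b ▸ hc.subset) hac hb
    refine ⟨Subtype.val ⁻¹' T, ?_, hT.bypass hdeg htri hcT⟩
    exact (Set.ncard_le_ncard_of_injOn Subtype.val (fun _ h => h)
      Subtype.val_injective.injOn).trans (hTS.trans hSk)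
  · rintro ⟨S, hSk, hS⟩
    refine ⟨Subtype.val '' S, (Set.ncard_image_of_injective _ Subtype.val_injective).le.trans hSk,
      IsCPPSet.of_bypass hdeg htri (fun x hx => ?_) (fun ⟨y, _, hy⟩ => y.2 hy) ?_⟩
    · rw [← mem_neighborSet, hc] at hx
      rcases hx with rfl | rfl | rfl
      exacts [(hc ▸ Set.ncard_pair hab).le, ha, hb]
    · rwa [Set.preimage_image_eq _ Subtype.val_injective]

end SimpleGraph

open SimpleGraph

theorem stmt13_general {V : Type*} [Fintype V] (G : SimpleGraph V) (h : ℕ) (hh : 4 ≤ h)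
    (v : ℕ → V)
    (hadj : ∀ i < h, G.Adj (v i) (v (i + 1)))
    (hinj : ∀ i ≤ h, ∀ j ≤ h, v i = v j → i = j ∨ (i = 0 ∧ j = h) ∨ (i = h ∧ j = 0))
    (hmid : ∀ i, 0 < i → i < h → (G.neighborSet (v i)).ncard = 2)
    (k : ℕ)
    (G' : SimpleGraph {x : V // x ≠ v 2})
    (hG' : ∀ a b : {x : V // x ≠ v 2}, G'.Adj a b ↔
      (G.Adj ↑a ↑b ∨ ((a : V) = v 1 ∧ (b : V) = v 3) ∨ ((a : V) = v 3 ∧ (b : V) = v 1))) :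
    (∃ S : Set V, S.ncard ≤ k ∧ (∀ x ∉ S, {w | G.Adj x w ∧ w ∉ S}.ncard ≤ 2) ∧
        (G.induce Sᶜ).IsAcyclic) ↔
    (∃ S : Set {x : V // x ≠ v 2}, S.ncard ≤ k ∧
        (∀ x ∉ S, {w | G'.Adj x w ∧ w ∉ S}.ncard ≤ 2) ∧ (G'.induce Sᶜ).IsAcyclic) := by
  have hne : ∀ i j, i < j → j < h → v i ≠ v j := fun i j hij hj he => by
    have := hinj i (by omega) j (by omega) he
    omega
  have hnb1 := neighborSet_eq_pair (hadj 0 (by omega)).symm (hadj 1 (by omega))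
    (hne 0 2 (by omega) (by omega)) (hmid 1 (by omega) (by omega))
  have hnb2 := neighborSet_eq_pair (hadj 1 (by omega)).symm (hadj 2 (by omega))
    (hne 1 3 (by omega) (by omega)) (hmid 2 (by omega) (by omega))
  have hnadj : ¬ G.Adj (v 1) (v 3) := fun h13 => by
    have : v 3 ∈ G.neighborSet (v 1) := h13
    rw [hnb1] at this
    rcases this with h30 | h32
    exacts [hne 0 3 (by omega) (by omega) h30.symm, hne 2 3 (by omega) (by omega) h32.symm]
  obtain rfl := eq_bypass_of_neighborSet_eq_pair hnb2 (hne 1 3 (by omega) (by omega)) hG'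
  exact exists_isCPPSet_iff_bypass hnb2 (hne 1 3 (by omega) (by omega)) hnadj
    (hmid 1 (by omega) (by omega)).le (hmid 3 (by omega) (by omega)).le k

/-- contracting a degree-two-path `v₀v₁…v_h` (`h ≥ 4`) by removing `v₂`
and adding the edge `v₁v₃` preserves the existence of a cPP-set of size at most `k`. -/
theorem stmt13 {V : Type*} [Fintype V] (G : SimpleGraph V) (h : ℕ) (hh : 4 ≤ h)
    (v : ℕ → V)
    (hadj : ∀ i < h, G.Adj (v i) (v (i + 1)))
    (hinj : ∀ i ≤ h, ∀ j ≤ h, v i = v j → i = j ∨ (i = 0 ∧ j = h) ∨ (i = h ∧ j = 0))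
    (hend0 : (G.neighborSet (v 0)).ncard ≠ 2) (hendh : (G.neighborSet (v h)).ncard ≠ 2)
    (hmid : ∀ i, 0 < i → i < h → (G.neighborSet (v i)).ncard = 2)
    (k : ℕ)
    (G' : SimpleGraph {x : V // x ≠ v 2})
    (hG' : ∀ a b : {x : V // x ≠ v 2}, G'.Adj a b ↔
      (G.Adj ↑a ↑b ∨ ((a : V) = v 1 ∧ (b : V) = v 3) ∨ ((a : V) = v 3 ∧ (b : V) = v 1))) :
    (∃ S : Set V, S.ncard ≤ k ∧ (∀ x ∉ S, {w | G.Adj x w ∧ w ∉ S}.ncard ≤ 2) ∧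
        (G.induce Sᶜ).IsAcyclic) ↔
    (∃ S : Set {x : V // x ≠ v 2}, S.ncard ≤ k ∧
        (∀ x ∉ S, {w | G'.Adj x w ∧ w ∉ S}.ncard ≤ 2) ∧ (G'.induce Sᶜ).IsAcyclic) :=
  stmt13_general G h hh v hadj hinj hmid k G' hG'
end
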